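/- arXiv:1911.12778 — 6 statements merged into one kernel-verified Lean document; each statement's English description precedes it below -/
import Mathlib

section
/- For every metric space (X,d) and every finite server set S ⊆ X with |S| = k ≥ 1, there exists a deterministic online matching algorithm A for S such that for every sequence of clients c_1,…,c_k ∈ X the following hold: (i) for every t ∈ {1,…,k}, the cost of the matching A(c_1,…,c_t) is at most (2·⌈log₂(t+1)⌉ − 1) times OPT_t, and (ii) every client index j ∈ {1,…,k} is reassigned at most ⌊log₂ k⌋ times over the whole sequence. -/
/-!
The algorithm keeps optimal matchings `optChain u` of the first `u` clients whose sets of used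
servers increase with `u`: exchanging an optimal matching of `u + 1` clients against one of `u`
clients along the alternating path of the new client does not increase its cost. At time
`t = q + 2 ^ v`, where `q = clearLowBit t` drops the lowest binary digit of `t`, the first `q`
clients keep their servers from time `q`, and the clients `q + 1, …, t` are matched, at cost at
most `OPT_q + OPT_t`, into servers of `optChain t` that `optChain q` does not use. By induction
the cost at time `t` is at most `(2 · bitCount t - 1) · OPT_t`, and `bitCount t ≤ ⌈log₂ (t + 1)⌉`.
The `clearLowBit`-chain of `t - 1` passes through `q`, so client `j` can only move at times `t`
with `clearLowBit t < j < t`, and two such times have different 2-adic valuations in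
`[1, log₂ k]`.
-/

/-- A matching of the first `t` clients (indexed `1,…,t`) into the server set `S`:
an injective assignment whose values on `{1,…,t}` are servers in `S`. -/
def IsMatching {X : Type*} [MetricSpace X] (S : Finset X) (t : ℕ) (f : ℕ → X) : Prop :=
  Set.InjOn f (Set.Icc 1 t) ∧ ∀ j ∈ Set.Icc 1 t, f j ∈ S

/-- The cost of a matching `f` of the first `t` clients `c 1, …, c t`. -/
noncomputable def matchingCost {X : Type*} [MetricSpace X] (t : ℕ) (c f : ℕ → X) : ℝ :=
  ∑ j ∈ Finset.Icc 1 t, dist (c j) (f j)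

/-- `OPT S t c` is the minimum cost of a matching of the first `t` clients into `S`. -/
noncomputable def OPT {X : Type*} [MetricSpace X] (S : Finset X) (t : ℕ) (c : ℕ → X) : ℝ :=
  sInf {r : ℝ | ∃ f : ℕ → X, IsMatching S t f ∧ matchingCost t c f = r}

/-- The prefix `(c 1, …, c t)` of the client sequence `c`, as a function on `Fin t`;
an online algorithm only gets to see this prefix at time `t`. -/
def prefixOf {X : Type*} (c : ℕ → X) (t : ℕ) : Fin t → X := fun j => c (j.1 + 1)


namespace OnlineMatching

open Set

lemma injOn_ite {α β : Type*} {s : Set α} {P : α → Prop} [DecidablePred P] {f g : α → β}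
    (hf : InjOn f {a ∈ s | P a}) (hg : InjOn g {a ∈ s | ¬P a})
    (hfg : ∀ a ∈ s, ∀ b ∈ s, P a → ¬P b → f a ≠ g b) :
    InjOn (fun a => if P a then f a else g a) s := by
  intro a ha b hb hab
  by_cases pa : P a <;> by_cases pb : P b <;> simp only [pa, pb, if_true, if_false] at hab
  · exact hf ⟨ha, pa⟩ ⟨hb, pb⟩ hab
  · exact absurd hab (hfg a ha b hb pa pb)
  · exact absurd hab.symm (hfg b hb a ha pb pa)
  · exact hg ⟨ha, pa⟩ ⟨hb, pb⟩ hab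

section AlternatingPath

variable {β : Type*} {g N : ℕ → β} {p x y : ℕ}

/-- The clients reachable from the new client `p + 1` by passing from a client `x` to the client
`y ≤ p` whose old server `g y` is the new server `N x` of `x`. -/
def alternatingPath (g N : ℕ → β) (p : ℕ) : Set ℕ :=
  {y | Relation.ReflTransGen (fun x y => y ∈ Icc 1 p ∧ N x = g y) (p + 1) y}

lemma succ_mem_alternatingPath : p + 1 ∈ alternatingPath g N p :=
  Relation.ReflTransGen.refl

lemma mem_alternatingPath_of_eq (hx : x ∈ alternatingPath g N p) (hy : y ∈ Icc 1 p)
    (h : N x = g y) : y ∈ alternatingPath g N p :=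
  Relation.ReflTransGen.tail hx ⟨hy, h⟩

lemma exists_of_mem_alternatingPath (hy : y ∈ alternatingPath g N p) (hne : y ≠ p + 1) :
    y ∈ Icc 1 p ∧ ∃ x ∈ alternatingPath g N p, N x = g y := by
  obtain rfl | ⟨x, hx, hy, h⟩ := Relation.ReflTransGen.cases_tail hy
  · exact absurd rfl hne
  · exact ⟨hy, x, hx, h⟩

lemma alternatingPath_subset : alternatingPath g N p ⊆ Icc 1 (p + 1) := by
  intro y hy
  by_cases hne : y = p + 1
  · exact ⟨by omega, hne.le⟩
  · exact Icc_subset_Icc_right p.le_succ (exists_of_mem_alternatingPath hy hne).1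

end AlternatingPath

variable {X : Type*} [MetricSpace X]

def IsOptimalMatching (S : Finset X) (t : ℕ) (c f : ℕ → X) : Prop :=
  IsMatching S t f ∧ matchingCost t c f = OPT S t c

section Matchings

variable {S : Finset X} {p t : ℕ} {c c' f f' : ℕ → X}

lemma matchingCost_nonneg : 0 ≤ matchingCost t c f :=
  Finset.sum_nonneg fun _ _ => dist_nonneg

lemma matchingCost_congr (hc : EqOn c c' (Icc 1 t)) (hf : EqOn f f' (Icc 1 t)) :
    matchingCost t c f = matchingCost t c' f' :=
  Finset.sum_congr rfl fun j hj => by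
    rw [← Finset.mem_coe, Finset.coe_Icc] at hj
    rw [hc hj, hf hj]

lemma matchingCost_congr_left (hc : EqOn c c' (Icc 1 t)) :
    matchingCost t c = matchingCost t c' :=
  funext fun _ => matchingCost_congr hc fun _ _ => rfl

lemma matchingCost_add_sum_Icc (hpt : p ≤ t) :
    matchingCost p c f + ∑ j ∈ Finset.Icc (p + 1) t, dist (c j) (f j) = matchingCost t c f := by
  have h := Finset.sum_Ioc_consecutive (fun j => dist (c j) (f j)) (Nat.zero_le p) hpt
  rwa [← Finset.Icc_add_one_left_eq_Ioc, ← Finset.Icc_add_one_left_eq_Ioc,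
    ← Finset.Icc_add_one_left_eq_Ioc] at h

lemma matchingCost_succ :
    matchingCost (t + 1) c f = matchingCost t c f + dist (c (t + 1)) (f (t + 1)) :=
  Finset.sum_Icc_succ_top (by omega) _

lemma matchingCost_mono (hpt : p ≤ t) : matchingCost p c f ≤ matchingCost t c f := by
  rw [← matchingCost_add_sum_Icc hpt]
  exact le_add_of_nonneg_right (Finset.sum_nonneg fun _ _ => dist_nonneg)

lemma matchingCost_ite (P : ℕ → Prop) [DecidablePred P] (f g : ℕ → X) :
    matchingCost t c (fun j => if P j then f j else g j) =
      ∑ j ∈ Finset.Icc 1 t with P j, dist (c j) (f j) +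
        ∑ j ∈ Finset.Icc 1 t with ¬P j, dist (c j) (g j) := by
  simp only [matchingCost, apply_ite (dist (c _)), Finset.sum_ite]

lemma matchingCost_ite_add_matchingCost_ite (P : ℕ → Prop) [DecidablePred P] (hP : P (p + 1))
    (f g : ℕ → X) :
    matchingCost (p + 1) c (fun j => if P j then f j else g j) +
        matchingCost p c (fun j => if P j then g j else f j) =
      matchingCost (p + 1) c f + matchingCost p c g := by
  have hfilter : {j ∈ Finset.Icc 1 (p + 1) | ¬P j} = {j ∈ Finset.Icc 1 p | ¬P j} := by
    ext j
    simp only [Finset.mem_filter, Finset.mem_Icc]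
    constructor
    · rintro ⟨hj, hjP⟩
      have : j ≠ p + 1 := fun h => hjP (h ▸ hP)
      exact ⟨⟨hj.1, by have := hj.2; omega⟩, hjP⟩
    · exact fun ⟨hj, hjP⟩ => ⟨⟨hj.1, hj.2.trans p.le_succ⟩, hjP⟩
  rw [matchingCost_ite, matchingCost_ite, matchingCost, matchingCost,
    ← Finset.sum_filter_add_sum_filter_not (Finset.Icc 1 (p + 1)) P,
    ← Finset.sum_filter_add_sum_filter_not (Finset.Icc 1 p) P, hfilter]
  ring

lemma IsMatching.mono (hpt : p ≤ t) (hf : IsMatching S t f) : IsMatching S p f :=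
  ⟨hf.1.mono (Icc_subset_Icc_right hpt), fun j hj => hf.2 j (Icc_subset_Icc_right hpt hj)⟩

lemma exists_isMatching [Nonempty X] (ht : t ≤ S.card) : ∃ f, IsMatching S t f := by
  have hle : (Icc 1 t).encard ≤ (S : Set X).encard := by
    rw [← Finset.coe_Icc, Set.encard_coe_eq_coe_finsetCard, Set.encard_coe_eq_coe_finsetCard,
      Nat.card_Icc]
    exact_mod_cast (by omega : t + 1 - 1 ≤ S.card)
  obtain ⟨f, hmaps, hinj⟩ := (finite_Icc 1 t).exists_injOn_of_encard_le hle
  exact ⟨f, hinj, fun j hj => hmaps hj⟩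

lemma finite_matchingCosts :
    {r | ∃ f, IsMatching S t f ∧ matchingCost t c f = r}.Finite := by
  classical
  refine (((Finset.Icc 1 t).pi fun _ => S).finite_toSet.image fun φ =>
    ∑ j ∈ (Finset.Icc 1 t).attach, dist (c j) (φ j j.2)).subset ?_
  rintro _ ⟨f, hf, rfl⟩
  refine ⟨fun j _ => f j, Finset.mem_pi.2 fun j hj => hf.2 j ?_, ?_⟩
  · rwa [← Finset.coe_Icc]
  · exact Finset.sum_attach (Finset.Icc 1 t) fun j => dist (c j) (f j)

lemma OPT_le (hf : IsMatching S t f) : OPT S t c ≤ matchingCost t c f :=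
  csInf_le ⟨0, by rintro _ ⟨g, -, rfl⟩; exact matchingCost_nonneg⟩ ⟨f, hf, rfl⟩

lemma OPT_nonneg : 0 ≤ OPT S t c :=
  Real.sInf_nonneg (by rintro _ ⟨g, -, rfl⟩; exact matchingCost_nonneg)

lemma OPT_zero : OPT S 0 c = 0 :=
  le_antisymm ((OPT_le (f := c) ⟨by simp, by simp⟩).trans_eq (by simp [matchingCost]))
    OPT_nonneg

lemma OPT_congr (hc : EqOn c c' (Icc 1 t)) : OPT S t c = OPT S t c' := by
  rw [OPT, OPT, matchingCost_congr_left hc]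

lemma exists_isOptimalMatching [Nonempty X] (ht : t ≤ S.card) :
    ∃ f, IsOptimalMatching S t c f := by
  obtain ⟨f, hf⟩ := exists_isMatching ht
  have hne : {r | ∃ f, IsMatching S t f ∧ matchingCost t c f = r}.Nonempty := ⟨_, f, hf, rfl⟩
  exact hne.csInf_mem finite_matchingCosts

lemma OPT_mono [Nonempty X] (hpt : p ≤ t) (ht : t ≤ S.card) : OPT S p c ≤ OPT S t c := by
  obtain ⟨f, hf, hcost⟩ := exists_isOptimalMatching (c := c) ht
  calc OPT S p c ≤ matchingCost p c f := OPT_le (IsMatching.mono hpt hf)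
    _ ≤ matchingCost t c f := matchingCost_mono hpt
    _ = OPT S t c := hcost

lemma isOptimalMatching_congr (hc : EqOn c c' (Icc 1 t)) :
    IsOptimalMatching S t c = IsOptimalMatching S t c' := by
  funext f
  rw [IsOptimalMatching, IsOptimalMatching, matchingCost_congr_left hc, OPT_congr hc]

end Matchings

section Exchange

variable {S : Finset X} {p t : ℕ} {g N : ℕ → X}

/-- Swapping `g` and `N` on the alternating path of the new client `p + 1` turns `(N, g)` into a
pair `(f, h)` of the same total cost in which `f` uses every server of `g`. -/
theorem exists_exchange (c : ℕ → X) (hg : IsMatching S p g) (hN : IsMatching S (p + 1) N) :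
    ∃ f h, IsMatching S (p + 1) f ∧ IsMatching S p h ∧ g '' Icc 1 p ⊆ f '' Icc 1 (p + 1) ∧
      matchingCost (p + 1) c f + matchingCost p c h =
        matchingCost (p + 1) c N + matchingCost p c g := by
  classical
  set P := alternatingPath g N p
  have hPsub : P ⊆ Icc 1 (p + 1) := alternatingPath_subset
  have hsucc : Icc 1 p ⊆ Icc 1 (p + 1) := Icc_subset_Icc_right p.le_succ
  have hcompl {j} (hj : j ∈ Icc 1 (p + 1)) (hjP : j ∉ P) : j ∈ Icc 1 p := by
    have : j ≠ p + 1 := fun h => hjP (h ▸ succ_mem_alternatingPath)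
    exact ⟨hj.1, by have := hj.2; omega⟩
  have hNg {a b} (ha : a ∈ P) (hb : b ∈ Icc 1 p) (hbP : b ∉ P) : N a ≠ g b :=
    fun h => hbP (mem_alternatingPath_of_eq ha hb h)
  have hgN {a b} (ha : a ∈ P) (hap : a ≤ p) (hb : b ∈ Icc 1 p) (hbP : b ∉ P) : g a ≠ N b := by
    obtain ⟨-, x, hx, hxa⟩ := exists_of_mem_alternatingPath ha (by omega)
    intro h
    exact hbP (hN.1 (hPsub hx) (hsucc hb) (hxa.trans h) ▸ hx)
  refine ⟨fun j => if j ∈ P then N j else g j, fun j => if j ∈ P then g j else N j,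
    ⟨injOn_ite ?_ ?_ ?_, fun j hj => ?_⟩, ⟨injOn_ite ?_ ?_ ?_, fun j hj => ?_⟩, ?_,
    matchingCost_ite_add_matchingCost_ite _ succ_mem_alternatingPath N g⟩
  · exact hN.1.mono fun j hj => hj.1
  · exact hg.1.mono fun j hj => hcompl hj.1 hj.2
  · exact fun a _ b hb haP hbP => hNg haP (hcompl hb hbP) hbP
  · dsimp only
    split_ifs with hjP
    exacts [hN.2 j hj, hg.2 j (hcompl hj hjP)]
  · exact hg.1.mono fun j hj => hj.1
  · exact hN.1.mono fun j hj => hsucc hj.1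
  · exact fun a ha b hb haP hbP => hgN haP ha.2 hb hbP
  · dsimp only
    split_ifs
    exacts [hg.2 j hj, hN.2 j (hsucc hj)]
  · rintro _ ⟨y, hy, rfl⟩
    by_cases hyP : y ∈ P
    · obtain ⟨-, x, hx, hxy⟩ := exists_of_mem_alternatingPath hyP (by have := hy.2; omega)
      exact ⟨x, hPsub hx, by simp only [if_pos (show x ∈ P from hx), hxy]⟩
    · exact ⟨y, hsucc hy, by simp [hyP]⟩

theorem exists_isOptimalMatching_image_subset [Nonempty X] (hg : IsOptimalMatching S p c g)
    (hp : p + 1 ≤ S.card) :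
    ∃ f, IsOptimalMatching S (p + 1) c f ∧ g '' Icc 1 p ⊆ f '' Icc 1 (p + 1) := by
  obtain ⟨N, hN, hNcost⟩ := exists_isOptimalMatching (c := c) hp
  obtain ⟨f, h, hf, hh, himage, hcost⟩ := exists_exchange c hg.1 hN
  refine ⟨f, ⟨hf, le_antisymm ?_ (OPT_le hf)⟩, himage⟩
  linarith [OPT_le (c := c) hh, hg.2]

/-- Rerouting the only client served by `s` (if any) to the unused server `u` costs at most a
detour through an arbitrary point `x`. -/
lemma sum_dist_swap_le [DecidableEq X] {c : ℕ → X} {A : Finset ℕ} {F : ℕ → X} (hF : InjOn F A)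
    {s u : X} (hu : ∀ j ∈ A, F j ≠ u) (x : X) :
    ∑ j ∈ A, dist (c j) (Equiv.swap s u (F j)) ≤
      ∑ j ∈ A, dist (c j) (F j) + (dist x s + dist x u) := by
  have hpoint : ∀ j ∈ A, dist (c j) (Equiv.swap s u (F j)) ≤
      dist (c j) (F j) + if F j = s then dist x s + dist x u else 0 := by
    intro j hj
    split_ifs with hjs
    · rw [hjs, Equiv.swap_apply_left, dist_comm x s, ← add_assoc]
      exact dist_triangle4 _ _ _ _
    · rw [Equiv.swap_apply_of_ne_of_ne hjs (hu j hj), add_zero]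
  have hatMostOne : (A.filter (F · = s)).card ≤ 1 :=
    Finset.card_le_one.2 fun a ha b hb => by
      simp only [Finset.mem_filter] at ha hb
      exact hF ha.1 hb.1 (ha.2.trans hb.2.symm)
  have hdetour : ∑ j ∈ A, (if F j = s then dist x s + dist x u else 0) ≤
      dist x s + dist x u := by
    rw [← Finset.sum_filter, Finset.sum_const, nsmul_eq_mul]
    exact mul_le_of_le_one_left (by positivity) (by exact_mod_cast hatMostOne)
  calc _ ≤ ∑ j ∈ A, (dist (c j) (F j) + if F j = s then dist x s + dist x u else 0) :=
        Finset.sum_le_sum hpoint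
    _ ≤ _ := by rw [Finset.sum_add_distrib]; gcongr

/-- By induction on `p`: when the server `g (p + 1)` becomes unavailable, the client using it is
rerouted through `c (p + 1)` to the server freed by client `p + 1`. -/
theorem exists_matching_of_new_clients (c : ℕ → X) (hN : InjOn N (Icc 1 t)) (hpt : p ≤ t) :
    ∃ F : ℕ → X, InjOn F (Icc (p + 1) t) ∧
      MapsTo F (Icc (p + 1) t) (N '' Icc 1 t \ g '' Icc 1 p) ∧
      ∑ j ∈ Finset.Icc (p + 1) t, dist (c j) (F j) ≤ matchingCost p c g + matchingCost t c N := by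
  induction p with
  | zero =>
    refine ⟨N, hN, fun j hj => ⟨mem_image_of_mem N hj, ?_⟩, ?_⟩
    · rintro ⟨i, hi, -⟩
      exact absurd hi.2 (by have := hi.1; omega)
    · simp [matchingCost]
  | succ p ih =>
    classical
    obtain ⟨F, hFinj, hFmaps, hFcost⟩ := ih (by omega)
    have hsub : Icc (p + 1 + 1) t ⊆ Icc (p + 1) t := Icc_subset_Icc_left p.succ.le_succ
    have hp : p + 1 ∈ Icc (p + 1) t := ⟨le_rfl, hpt⟩
    have hne : ∀ j ∈ Icc (p + 1 + 1) t, F j ≠ F (p + 1) := fun j hj h => by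
      have := hFinj (hsub hj) hp h
      have := hj.1
      omega
    have htarget : ∀ v ∈ N '' Icc 1 t \ g '' Icc 1 p, v ≠ g (p + 1) →
        v ∈ N '' Icc 1 t \ g '' Icc 1 (p + 1) := fun v hv hvs =>
      ⟨hv.1, by
        rw [← insert_Icc_right_eq_Icc_add_one (by omega), image_insert_eq, mem_insert_iff]
        exact not_or.2 ⟨hvs, hv.2⟩⟩
    refine ⟨Equiv.swap (g (p + 1)) (F (p + 1)) ∘ F,
      (Equiv.injective _).comp_injOn (hFinj.mono hsub), fun j hj => ?_, ?_⟩
    · by_cases hjs : F j = g (p + 1)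
      · rw [Function.comp_apply, hjs, Equiv.swap_apply_left]
        exact htarget _ (hFmaps hp) fun h => hne j hj (hjs.trans h.symm)
      · rw [Function.comp_apply, Equiv.swap_apply_of_ne_of_ne hjs (hne j hj)]
        exact htarget _ (hFmaps (hsub hj)) hjs
    · have hsplit := Finset.add_sum_Ioc_eq_sum_Icc (f := fun j => dist (c j) (F j)) hpt
      rw [← Finset.Icc_add_one_left_eq_Ioc] at hsplit
      have hswap := sum_dist_swap_le (c := c) (A := Finset.Icc (p + 1 + 1) t) (s := g (p + 1))
        (by rw [Finset.coe_Icc]; exact hFinj.mono hsub) (fun j hj => hne j (Finset.mem_Icc.1 hj))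
        (c (p + 1))
      rw [matchingCost_succ]
      simp only [Function.comp_apply]
      linarith

end Exchange

section BinaryCounter

variable {n : ℕ}

def clearLowBit (n : ℕ) : ℕ := n - ordProj[2] n

lemma clearLowBit_zero : clearLowBit 0 = 0 := by simp [clearLowBit]

lemma clearLowBit_add_ordProj (hn : n ≠ 0) : clearLowBit n + ordProj[2] n = n :=
  Nat.sub_add_cancel (Nat.ordProj_le 2 hn)

lemma clearLowBit_lt (hn : n ≠ 0) : clearLowBit n < n :=
  Nat.sub_lt (Nat.pos_of_ne_zero hn) Nat.one_le_two_pow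

lemma clearLowBit_le (n : ℕ) : clearLowBit n ≤ n := Nat.sub_le _ _

lemma clearLowBit_of_not_dvd (h : ¬2 ∣ n) : clearLowBit n = n - 1 := by
  rw [clearLowBit, Nat.factorization_eq_zero_of_not_dvd h, pow_zero]

lemma clearLowBit_two_mul (n : ℕ) : clearLowBit (2 * n) = 2 * clearLowBit n := by
  rcases eq_or_ne n 0 with rfl | hn
  · rfl
  have : (2 * n).factorization 2 = n.factorization 2 + 1 := by
    rw [Nat.factorization_mul two_ne_zero hn, Finsupp.add_apply,
      Nat.prime_two.factorization_self, add_comm]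
  rw [clearLowBit, clearLowBit, this, pow_succ', Nat.mul_sub]

lemma factorization_lt_factorization_clearLowBit (hn : n ≠ 0) (h : clearLowBit n ≠ 0) :
    n.factorization 2 < (clearLowBit n).factorization 2 := by
  -- `n = 2 ^ v * (2 * k + 1)`, so `clearLowBit n = 2 ^ (v + 1) * k`
  obtain ⟨k, hk⟩ : Odd (n / ordProj[2] n) :=
    Nat.odd_iff.2 (Nat.two_dvd_ne_zero.1 (Nat.not_dvd_ordCompl Nat.prime_two hn))
  have hn' := Nat.ordProj_mul_ordCompl_eq_self n 2
  rw [hk] at hn'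
  have hdvd : 2 ^ (n.factorization 2 + 1) ∣ clearLowBit n := ⟨k, by
    rw [clearLowBit, pow_succ]
    nth_rewrite 1 [← hn']
    rw [mul_add_one, Nat.add_sub_cancel]
    ring⟩
  exact (Nat.prime_two.pow_dvd_iff_le_factorization h).1 hdvd

lemma exists_iterate_clearLowBit_pred (hn : n ≠ 0) :
    ∃ i, clearLowBit^[i] (n - 1) = clearLowBit n := by
  induction n using Nat.strong_induction_on with
  | _ n ih =>
  obtain ⟨m, rfl | rfl⟩ := Nat.even_or_odd' n
  · obtain ⟨i, hi⟩ := ih m (by omega) (by omega)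
    have hcomm : Function.Semiconj (2 * ·) clearLowBit clearLowBit :=
      fun x => (clearLowBit_two_mul x).symm
    refine ⟨i + 1, ?_⟩
    rw [Function.iterate_succ_apply, clearLowBit_of_not_dvd (by omega),
      show 2 * m - 1 - 1 = 2 * (m - 1) by omega, ← hcomm.iterate_right i, hi, clearLowBit_two_mul]
  · exact ⟨0, by rw [clearLowBit_of_not_dvd (by omega)]; rfl⟩

/-- The number of ones in the binary expansion of `n`. -/
def bitCount : ℕ → ℕ
  | 0 => 0
  | n + 1 => bitCount (clearLowBit (n + 1)) + 1
decreasing_by exact clearLowBit_lt n.succ_ne_zero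

lemma bitCount_of_ne_zero (hn : n ≠ 0) : bitCount n = bitCount (clearLowBit n) + 1 := by
  obtain ⟨m, rfl⟩ := Nat.exists_eq_succ_of_ne_zero hn
  rw [bitCount]

lemma bitCount_add_factorization_le (hn : n ≠ 0) :
    bitCount n + n.factorization 2 ≤ Nat.log 2 n + 1 := by
  induction n using Nat.strong_induction_on with
  | _ n ih =>
  rw [bitCount_of_ne_zero hn]
  by_cases h : clearLowBit n = 0
  · have hpow : 2 ^ n.factorization 2 = n := by have := clearLowBit_add_ordProj hn; omega
    have hlog : Nat.log 2 n = n.factorization 2 := by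
      conv_lhs => rw [← hpow]
      exact Nat.log_pow one_lt_two _
    rw [h, bitCount]
    omega
  · have := ih _ (clearLowBit_lt hn) h
    have := factorization_lt_factorization_clearLowBit hn h
    have := Nat.log_mono_right (b := 2) (clearLowBit_le n)
    omega

lemma bitCount_le_clog (hn : n ≠ 0) : bitCount n ≤ Nat.clog 2 (n + 1) := by
  have hlog : Nat.log 2 n < Nat.clog 2 (n + 1) :=
    (Nat.lt_clog_iff_pow_lt one_lt_two).2 (Nat.lt_succ_of_le (Nat.pow_log_le_self 2 hn))
  have := bitCount_add_factorization_le hn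
  omega

/-- The window `(clearLowBit t, t]` has length `ordProj[2] t` and contains only one multiple of
it, so `t` is determined by `j` and the 2-adic valuation of `t`. -/
lemma ncard_window_le (j k : ℕ) :
    {t | clearLowBit t < j ∧ j < t ∧ t ≤ k}.ncard ≤ Nat.log 2 k := by
  set W := {t | clearLowBit t < j ∧ j < t ∧ t ≤ k}
  have hmaps : ∀ t ∈ W, t.factorization 2 ∈ Icc 1 (Nat.log 2 k) := by
    rintro t ⟨hB, hjt, htk⟩
    have := clearLowBit_add_ordProj (n := t) (by omega)
    refine ⟨?_, Nat.le_log_of_pow_le one_lt_two (by omega)⟩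
    by_contra h0
    rw [Nat.lt_one_iff.1 (not_le.1 h0), pow_zero] at this
    omega
  have hinj : InjOn (fun t => t.factorization 2) W := by
    rintro t₁ ⟨hB₁, hj₁, -⟩ t₂ ⟨hB₂, hj₂, -⟩ (heq : t₁.factorization 2 = t₂.factorization 2)
    have e₁ := clearLowBit_add_ordProj (n := t₁) (by omega)
    have e₂ := clearLowBit_add_ordProj (n := t₂) (by omega)
    obtain ⟨a, ha⟩ := Nat.ordProj_dvd t₁ 2
    obtain ⟨b, hb⟩ := Nat.ordProj_dvd t₂ 2
    rw [heq] at ha e₁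
    have hab : a < b + 1 := Nat.lt_of_mul_lt_mul_left (a := 2 ^ t₂.factorization 2) (by
      rw [mul_add_one]; omega)
    have hba : b < a + 1 := Nat.lt_of_mul_lt_mul_left (a := 2 ^ t₂.factorization 2) (by
      rw [mul_add_one]; omega)
    rw [ha, show a = b by omega, ← hb]
  calc W.ncard ≤ (Icc 1 (Nat.log 2 k)).ncard := ncard_le_ncard_of_injOn _ hmaps hinj
    _ = Nat.log 2 k := by
      rw [← Finset.coe_Icc, ncard_coe_finset, Nat.card_Icc, Nat.add_sub_cancel]

end BinaryCounter
section Algorithm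

variable (S : Finset X) [Nonempty X] {c c' : ℕ → X} {j p q t u : ℕ}

/- Every choice below is `Classical.epsilon` of a predicate that depends on `c` only through
`c 1, …, c t` for the relevant time `t`; this is what makes the algorithm online
(`counterMatching_congr`). -/

noncomputable def optChain (c : ℕ → X) : ℕ → ℕ → X
  | 0 => Classical.arbitrary _
  | u + 1 => Classical.epsilon fun f =>
      IsOptimalMatching S (u + 1) c f ∧ optChain c u '' Icc 1 u ⊆ f '' Icc 1 (u + 1)

lemma isOptimalMatching_optChain (hu : u ≤ S.card) :
    IsOptimalMatching S u c (optChain S c u) := by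
  induction u with
  | zero => exact ⟨⟨by simp, by simp⟩, by simp [matchingCost, OPT_zero]⟩
  | succ u ih =>
    exact (Classical.epsilon_spec
      (exists_isOptimalMatching_image_subset (ih (by omega)) hu)).1

lemma optChain_image_subset_succ (hu : u + 1 ≤ S.card) :
    optChain S c u '' Icc 1 u ⊆ optChain S c (u + 1) '' Icc 1 (u + 1) :=
  (Classical.epsilon_spec (exists_isOptimalMatching_image_subset
    (isOptimalMatching_optChain S (by omega)) hu)).2

lemma optChain_image_mono (hqt : q ≤ t) (ht : t ≤ S.card) :
    optChain S c q '' Icc 1 q ⊆ optChain S c t '' Icc 1 t := by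
  induction t, hqt using Nat.le_induction with
  | base => exact subset_rfl
  | succ t _ ih => exact (ih (by omega)).trans (optChain_image_subset_succ S ht)

lemma optChain_congr (hc : EqOn c c' (Icc 1 u)) : optChain S c u = optChain S c' u := by
  induction u with
  | zero => rfl
  | succ u ih =>
    rw [optChain, optChain, ih (hc.mono (Icc_subset_Icc_right u.le_succ)),
      isOptimalMatching_congr hc]

def IsSegment (c : ℕ → X) (p t : ℕ) (F : ℕ → X) : Prop :=
  InjOn F (Icc (p + 1) t) ∧
    MapsTo F (Icc (p + 1) t) (optChain S c t '' Icc 1 t \ optChain S c p '' Icc 1 p) ∧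
    ∑ j ∈ Finset.Icc (p + 1) t, dist (c j) (F j) ≤ OPT S p c + OPT S t c

noncomputable def segment (c : ℕ → X) (p t : ℕ) : ℕ → X :=
  Classical.epsilon (IsSegment S c p t)

lemma isSegment_segment (hpt : p ≤ t) (ht : t ≤ S.card) :
    IsSegment S c p t (segment S c p t) := by
  obtain ⟨hN, hNcost⟩ := isOptimalMatching_optChain S (c := c) ht
  obtain ⟨-, hgcost⟩ := isOptimalMatching_optChain S (c := c) (hpt.trans ht)
  refine Classical.epsilon_spec ?_
  unfold IsSegment
  rw [← hNcost, ← hgcost]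
  exact exists_matching_of_new_clients c hN.1 hpt

lemma segment_congr (hc : EqOn c c' (Icc 1 t)) (hpt : p ≤ t) :
    segment S c p t = segment S c' p t := by
  have hcp := hc.mono (Icc_subset_Icc_right hpt)
  have hsum : ∀ F : ℕ → X, ∑ j ∈ Finset.Icc (p + 1) t, dist (c j) (F j) =
      ∑ j ∈ Finset.Icc (p + 1) t, dist (c' j) (F j) := fun F =>
    Finset.sum_congr rfl fun j hj => by
      rw [Finset.mem_Icc] at hj
      rw [hc ⟨by omega, hj.2⟩]
  have : IsSegment S c p t = IsSegment S c' p t := by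
    funext F
    simp only [IsSegment, optChain_congr S hc, optChain_congr S hcp, OPT_congr hc,
      OPT_congr hcp, hsum]
  rw [segment, segment, this]

noncomputable def counterMatching (c : ℕ → X) : ℕ → ℕ → X
  | 0 => Classical.arbitrary _
  | t + 1 => fun j =>
      if j ≤ clearLowBit (t + 1) then counterMatching c (clearLowBit (t + 1)) j
      else segment S c (clearLowBit (t + 1)) (t + 1) j
decreasing_by exact clearLowBit_lt t.succ_ne_zero

lemma counterMatching_of_ne_zero (ht : t ≠ 0) :
    counterMatching S c t = fun j => if j ≤ clearLowBit t then
      counterMatching S c (clearLowBit t) j else segment S c (clearLowBit t) t j := by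
  obtain ⟨t, rfl⟩ := Nat.exists_eq_succ_of_ne_zero ht
  rw [counterMatching]

lemma counterMatching_apply_of_le (ht : t ≠ 0) (hj : j ≤ clearLowBit t) :
    counterMatching S c t j = counterMatching S c (clearLowBit t) j := by
  simp only [counterMatching_of_ne_zero S ht, if_pos hj]

lemma counterMatching_apply_of_lt (ht : t ≠ 0) (hj : clearLowBit t < j) :
    counterMatching S c t j = segment S c (clearLowBit t) t j := by
  simp only [counterMatching_of_ne_zero S ht, if_neg hj.not_ge]

lemma counterMatching_congr (hc : EqOn c c' (Icc 1 t)) :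
    counterMatching S c t = counterMatching S c' t := by
  induction t using Nat.strong_induction_on with
  | _ t ih =>
  rcases eq_or_ne t 0 with rfl | ht
  · rw [counterMatching, counterMatching]
  rw [counterMatching_of_ne_zero S ht, counterMatching_of_ne_zero S ht,
    ih _ (clearLowBit_lt ht) (hc.mono (Icc_subset_Icc_right (clearLowBit_le t))),
    segment_congr S hc (clearLowBit_le t)]

lemma injOn_mapsTo_counterMatching (ht : t ≤ S.card) :
    InjOn (counterMatching S c t) (Icc 1 t) ∧
      MapsTo (counterMatching S c t) (Icc 1 t) (optChain S c t '' Icc 1 t) := by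
  induction t using Nat.strong_induction_on with
  | _ t ih =>
  rcases eq_or_ne t 0 with rfl | ht0
  · simp
  set q := clearLowBit t
  have hq : q < t := clearLowBit_lt ht0
  obtain ⟨hinj, hmaps⟩ := ih q hq (by omega)
  obtain ⟨hFinj, hFmaps, -⟩ := isSegment_segment S (c := c) hq.le ht
  have hold : ∀ j ∈ Icc 1 t, j ≤ q → counterMatching S c q j ∈ optChain S c q '' Icc 1 q :=
    fun j hj hjq => hmaps ⟨hj.1, hjq⟩
  have hnew : ∀ j ∈ Icc 1 t, ¬j ≤ q →
      segment S c q t j ∈ optChain S c t '' Icc 1 t \ optChain S c q '' Icc 1 q :=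
    fun j hj hjq => hFmaps ⟨by omega, hj.2⟩
  rw [counterMatching_of_ne_zero S ht0]
  refine ⟨injOn_ite (hinj.mono fun j hj => (⟨hj.1.1, hj.2⟩ : j ∈ Icc 1 q))
    (hFinj.mono fun j hj => (⟨by have := hj.2; omega, hj.1.2⟩ : j ∈ Icc (q + 1) t))
    fun a ha b hb haq hbq h => (hnew b hb hbq).2 (h ▸ hold a ha haq), fun j hj => ?_⟩
  dsimp only
  split_ifs with hjq
  · exact optChain_image_mono S hq.le ht (hold j hj hjq)
  · exact (hnew j hj hjq).1

lemma isMatching_counterMatching (ht : t ≤ S.card) :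
    IsMatching S t (counterMatching S c t) := by
  obtain ⟨hinj, hmaps⟩ := injOn_mapsTo_counterMatching S (c := c) ht
  refine ⟨hinj, fun j hj => ?_⟩
  obtain ⟨i, hi, hij⟩ := hmaps hj
  exact hij ▸ (isOptimalMatching_optChain S ht).1.2 i hi

lemma matchingCost_counterMatching_le (ht : t ≤ S.card) :
    matchingCost t c (counterMatching S c t) ≤ (2 * bitCount t - 1) * OPT S t c := by
  induction t using Nat.strong_induction_on with
  | _ t ih =>
  rcases eq_or_ne t 0 with rfl | ht0
  · simp [matchingCost, OPT_zero]
  set q := clearLowBit t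
  have hq : q < t := clearLowBit_lt ht0
  have hold : matchingCost q c (counterMatching S c t) =
      matchingCost q c (counterMatching S c q) :=
    matchingCost_congr (fun _ _ => rfl) fun j hj => counterMatching_apply_of_le S ht0 hj.2
  have hnew : ∑ j ∈ Finset.Icc (q + 1) t, dist (c j) (counterMatching S c t j) =
      ∑ j ∈ Finset.Icc (q + 1) t, dist (c j) (segment S c q t j) :=
    Finset.sum_congr rfl fun j hj => by
      rw [counterMatching_apply_of_lt S ht0 (Finset.mem_Icc.1 hj).1]
  have hcount : (bitCount t : ℝ) = bitCount q + 1 := by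
    rw [bitCount_of_ne_zero ht0]
    push_cast
    ring
  have hmono := mul_le_mul_of_nonneg_left (OPT_mono (c := c) hq.le ht)
    (by positivity : (0 : ℝ) ≤ 2 * bitCount q)
  rw [← matchingCost_add_sum_Icc hq.le, hold, hnew, hcount]
  linarith [ih q hq (by omega), (isSegment_segment S (c := c) hq.le ht).2.2]

lemma counterMatching_apply_iterate (i : ℕ) (hj : j ≤ clearLowBit^[i] t) :
    counterMatching S c t j = counterMatching S c (clearLowBit^[i] t) j := by
  induction i with
  | zero => rfl
  | succ i ih =>
    rw [Function.iterate_succ_apply'] at hj ⊢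
    rw [ih (hj.trans (clearLowBit_le _))]
    rcases eq_or_ne (clearLowBit^[i] t) 0 with h | h
    · rw [h, clearLowBit_zero]
    · exact counterMatching_apply_of_le S h hj

lemma counterMatching_apply_pred (ht : t ≠ 0) (hj : j ≤ clearLowBit t) :
    counterMatching S c t j = counterMatching S c (t - 1) j := by
  obtain ⟨i, hi⟩ := exists_iterate_clearLowBit_pred ht
  have hj' : j ≤ clearLowBit^[i] (t - 1) := by rwa [hi]
  rw [counterMatching_apply_of_le S ht hj, counterMatching_apply_iterate S i hj', hi]

lemma ncard_reassignments_le (j k : ℕ) :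
    {t | j < t ∧ t ≤ k ∧ counterMatching S c t j ≠ counterMatching S c (t - 1) j}.ncard ≤
      Nat.log 2 k := by
  refine (ncard_le_ncard ?_ ((finite_Iic k).subset fun t ht => ht.2.2)).trans
    (ncard_window_le j k)
  rintro t ⟨hjt, htk, hne⟩
  refine ⟨?_, hjt, htk⟩
  by_contra! hle
  exact hne (counterMatching_apply_pred S (by omega) hle)

end Algorithm

noncomputable def ofPrefix {α : Type*} [Nonempty α] {t : ℕ} (cp : Fin t → α) (j : ℕ) : α :=
  if h : 1 ≤ j ∧ j ≤ t then cp ⟨j - 1, by omega⟩ else Classical.arbitrary α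

lemma ofPrefix_prefixOf {α : Type*} [Nonempty α] (c : ℕ → α) (t : ℕ) :
    EqOn (ofPrefix (prefixOf c t)) c (Icc 1 t) := by
  rintro j ⟨h1, h2⟩
  simp [ofPrefix, prefixOf, h1, h2, Nat.sub_add_cancel h1]

end OnlineMatching

open OnlineMatching in
/-- For every metric space `(X,d)` and finite server set `S` with `|S| = k ≥ 1`, there is a
deterministic online matching algorithm `A` for `S` such that for every client sequence
`c 1, …, c k`: (i) at every time `1 ≤ t ≤ k` the matching maintained has cost at most
`(2⌈log₂(t+1)⌉ − 1) · OPT_t`, and (ii) every client index `j` is reassigned at most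
`⌊log₂ k⌋` times over the whole sequence. -/
theorem stmt0 {X : Type*} [MetricSpace X] (S : Finset X) (hk : 1 ≤ S.card) :
    ∃ A : (t : ℕ) → (Fin t → X) → (ℕ → X),
      (∀ t, t ≤ S.card → ∀ cp : Fin t → X, IsMatching S t (A t cp)) ∧
      ∀ c : ℕ → X,
        (∀ t, 1 ≤ t → t ≤ S.card →
          matchingCost t c (A t (prefixOf c t)) ≤
            (2 * (Nat.clog 2 (t + 1) : ℝ) - 1) * OPT S t c) ∧
        (∀ j, 1 ≤ j → j ≤ S.card →
          {t : ℕ | j < t ∧ t ≤ S.card ∧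
              A t (prefixOf c t) j ≠ A (t - 1) (prefixOf c (t - 1)) j}.ncard
            ≤ Nat.log 2 S.card) := by
  obtain ⟨x₀, -⟩ := Finset.card_pos.1 hk
  have : Nonempty X := ⟨x₀⟩
  have hA (c : ℕ → X) (t : ℕ) :
      counterMatching S (ofPrefix (prefixOf c t)) t = counterMatching S c t :=
    counterMatching_congr S (ofPrefix_prefixOf c t)
  refine ⟨fun t cp => counterMatching S (ofPrefix cp) t,
    fun t ht _ => isMatching_counterMatching S ht, fun c => ⟨fun t ht1 ht => ?_, fun j _ _ => ?_⟩⟩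
  · have hbits : (bitCount t : ℝ) ≤ Nat.clog 2 (t + 1) := by
      exact_mod_cast bitCount_le_clog (by omega)
    simp only [hA]
    refine (matchingCost_counterMatching_le S ht).trans (mul_le_mul_of_nonneg_right ?_ OPT_nonneg)
    linarith
  · simp only [hA]
    exact ncard_reassignments_le S j S.card
end

section
/- Let n ≥ 2, let X = {0,1,…,n} carry the star metric, i.e. d(x,y) = 0 if x = y, d(0,i) = d(i,0) = 1 for i ≥ 1, and d(i,j) = 2 for distinct i,j ≥ 1, and let the server set be S = {1,…,n}. Let C ≥ 1 be an integer and let A be a deterministic online matching algorithm for S with per-client recourse at most C, i.e. for every client sequence (c_1,…,c_m) with m ≤ n and every index j ≤ m, the set of servers {A(c_1,…,c_t)(j) : j ≤ t ≤ m} has cardinality at most C. Then there exist m ≤ n, a sequence (c_1,…,c_m) of pairwise distinct points of X with c_1 = 0, and a time t ≤ m such that the cost of the matching A(c_1,…,c_t) is at least log n / log(C+1) − 1, while OPT_t = 1. -/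
open Finset

theorem injOn_of_lt_imp_ne {ι β : Type*} [LinearOrder ι] {f : ι → β} {s : Set ι}
    (h : ∀ a ∈ s, ∀ b ∈ s, a < b → f a ≠ f b) : Set.InjOn f s := fun a ha b hb hab => by
  by_contra hne
  rcases lt_or_gt_of_ne hne with hlt | hlt
  exacts [h a ha b hb hlt hab, h b hb a ha hlt hab.symm]

section Iterate

variable {α : Type*} {s : Set α} {g : α → α} {a : α}

theorem Set.InjOn.injOn_iterate_Iic (hg : Set.InjOn g s) (ha : a ∉ g '' s) {R : ℕ}
    (hR : ∀ k < R, g^[k] a ∈ s) : Set.InjOn (fun k => g^[k] a) (Set.Iic R) := by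
  refine injOn_of_lt_imp_ne fun i hi j hj hij h => ?_
  induction i generalizing j with
  | zero =>
    obtain ⟨j, rfl⟩ := Nat.exists_eq_add_one.2 hij
    rw [Function.iterate_succ_apply'] at h
    exact ha ⟨_, hR j (by grind), h.symm⟩
  | succ i ih =>
    obtain ⟨j, rfl⟩ := Nat.exists_eq_add_one.2 (i.succ_pos.trans hij)
    rw [Function.iterate_succ_apply', Function.iterate_succ_apply'] at h
    exact ih (by grind) j (by grind) (by omega) (hg (hR i (by grind)) (hR j (by grind)) h)

theorem Set.InjOn.exists_iterate_notMem (hs : s.Finite) (hg : Set.InjOn g s) (ha : a ∉ g '' s) :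
    ∃ k, g^[k] a ∉ s := by
  by_contra! h
  have hinj : Function.Injective fun k => g^[k] a := fun i j hij =>
    hg.injOn_iterate_Iic ha (R := max i j) (fun k _ => h k) (le_max_left i j) (le_max_right i j) hij
  exact Set.infinite_range_of_injective hinj (hs.subset (Set.range_subset_iff.2 h))

end Iterate

theorem injOn_Icc_of_succ_notMem_image {α : Type*} {c : ℕ → α} {m : ℕ}
    (h : ∀ τ < m, c (τ + 1) ∉ c '' Set.Icc 1 τ) : Set.InjOn c (Set.Icc 1 m) := by
  refine injOn_of_lt_imp_ne fun a ha b hb hab hcab => ?_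
  obtain ⟨τ, rfl⟩ := Nat.exists_eq_add_one.2 ((Nat.one_pos.trans_le ha.1).trans hab)
  exact h τ (by grind) ⟨a, ⟨ha.1, by omega⟩, hcab⟩

section Reach

variable {α : Type*} [DecidableEq α] (V : α → Finset α) (x₀ : α)

def reachWithin : ℕ → Finset α
  | 0 => {x₀}
  | k + 1 => reachWithin k ∪ (reachWithin k).biUnion V

theorem reachWithin_mono : Monotone (reachWithin V x₀) :=
  monotone_nat_of_le_succ fun _ => subset_union_left

theorem card_reachWithin_le {C : ℕ} (hV : ∀ x, #(V x) ≤ C) (k : ℕ) :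
    #(reachWithin V x₀ k) ≤ (C + 1) ^ k := by
  induction k with
  | zero => simp [reachWithin]
  | succ k ih =>
    calc #(reachWithin V x₀ (k + 1))
        ≤ #(reachWithin V x₀ k) + #(reachWithin V x₀ k) * C :=
          (card_union_le _ _).trans <|
            Nat.add_le_add_left (card_biUnion_le_card_mul _ _ _ fun x _ => hV x) _
      _ = (C + 1) * #(reachWithin V x₀ k) := by ring
      _ ≤ (C + 1) ^ (k + 1) := by rw [pow_succ']; exact Nat.mul_le_mul_left _ ih

theorem mem_reachWithin_of_walk {p : ℕ → α} (hp0 : p 0 = x₀) {k : ℕ}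
    (hp : ∀ i < k, p (i + 1) ∈ V (p i)) : p k ∈ reachWithin V x₀ k := by
  induction k with
  | zero => simp [reachWithin, hp0]
  | succ k ih =>
    exact mem_union_right _ (mem_biUnion.2 ⟨p k, ih fun i hi => hp i (by omega), hp k (by omega)⟩)

end Reach

section AlternatingPath

variable {X : Type*} {τ : ℕ}

theorem range_prefixOf (c : ℕ → X) (τ : ℕ) : Set.range (prefixOf c τ) = c '' Set.Icc 1 τ := by
  ext x
  constructor
  · rintro ⟨i, rfl⟩
    exact ⟨i + 1, ⟨by omega, i.2⟩, rfl⟩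
  · rintro ⟨j, hj, rfl⟩
    exact ⟨⟨j - 1, by grind⟩, by simp only [prefixOf]; congr; grind⟩

open Classical in
/-- The (1-based) index of a client at `x`, and the junk value `0` if there is none. -/
noncomputable def clientIndex (cp : Fin τ → X) (x : X) : ℕ :=
  if h : ∃ i, cp i = x then h.choose + 1 else 0

theorem clientIndex_prefixOf {c : ℕ → X} {x : X} (hx : x ∈ Set.range (prefixOf c τ)) :
    clientIndex (prefixOf c τ) x ∈ Set.Icc 1 τ ∧ c (clientIndex (prefixOf c τ) x) = x := by
  have h : ∃ i, prefixOf c τ i = x := hx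
  rw [clientIndex, dif_pos h]
  exact ⟨⟨by omega, h.choose.2⟩, h.choose_spec⟩

variable (A : (t : ℕ) → (Fin t → X) → ℕ → X)

noncomputable def pathStep (cp : Fin τ → X) (x : X) : X :=
  A τ cp (clientIndex cp x)

noncomputable def exitTime (cp : Fin τ → X) (x₀ : X) : ℕ :=
  sInf {k | (pathStep A cp)^[k] x₀ ∉ Set.range cp}

noncomputable def pathExit (cp : Fin τ → X) (x₀ : X) : X :=
  (pathStep A cp)^[exitTime A cp x₀] x₀

theorem iterate_pathStep_mem_range {cp : Fin τ → X} {x₀ : X} {k : ℕ}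
    (hk : k < exitTime A cp x₀) : (pathStep A cp)^[k] x₀ ∈ Set.range cp := by
  simpa using Nat.notMem_of_lt_sInf hk

variable [MetricSpace X] {S : Finset X} {c : ℕ → X} {x₀ : X}

theorem pathStep_injOn (hA : IsMatching S τ (A τ (prefixOf c τ))) :
    Set.InjOn (pathStep A (prefixOf c τ)) (Set.range (prefixOf c τ)) := by
  intro x hx y hy hxy
  obtain ⟨hix, hcx⟩ := clientIndex_prefixOf hx
  obtain ⟨hiy, hcy⟩ := clientIndex_prefixOf hy
  rw [← hcx, ← hcy, hA.1 hix hiy hxy]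

theorem pathStep_mem (hA : IsMatching S τ (A τ (prefixOf c τ))) {x : X}
    (hx : x ∈ Set.range (prefixOf c τ)) : pathStep A (prefixOf c τ) x ∈ S :=
  hA.2 _ (clientIndex_prefixOf hx).1

theorem notMem_image_pathStep (hA : IsMatching S τ (A τ (prefixOf c τ))) (hx₀ : x₀ ∉ S) :
    x₀ ∉ pathStep A (prefixOf c τ) '' Set.range (prefixOf c τ) :=
  fun ⟨_, hx, h⟩ => hx₀ (h ▸ pathStep_mem A hA hx)

theorem pathExit_notMem (hA : IsMatching S τ (A τ (prefixOf c τ))) (hx₀ : x₀ ∉ S) :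
    pathExit A (prefixOf c τ) x₀ ∉ Set.range (prefixOf c τ) :=
  Nat.sInf_mem <| (pathStep_injOn A hA).exists_iterate_notMem (Set.finite_range _)
    (notMem_image_pathStep A hA hx₀)

theorem exitTime_pos (hA : IsMatching S τ (A τ (prefixOf c τ))) (hx₀ : x₀ ∉ S)
    (h : x₀ ∈ Set.range (prefixOf c τ)) : 0 < exitTime A (prefixOf c τ) x₀ := by
  by_contra! h0
  apply pathExit_notMem A hA hx₀
  rwa [pathExit, Nat.le_zero.1 h0, Function.iterate_zero_apply]

theorem injOn_iterate_pathStep (hA : IsMatching S τ (A τ (prefixOf c τ))) (hx₀ : x₀ ∉ S) :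
    Set.InjOn (fun k => (pathStep A (prefixOf c τ))^[k] x₀)
      (Set.Iic (exitTime A (prefixOf c τ) x₀)) :=
  (pathStep_injOn A hA).injOn_iterate_Iic (notMem_image_pathStep A hA hx₀)
    fun _ => iterate_pathStep_mem_range A

theorem iterate_pathStep_mem (hA : IsMatching S τ (A τ (prefixOf c τ))) {k : ℕ}
    (hk : k ∈ Set.Icc 1 (exitTime A (prefixOf c τ) x₀)) :
    (pathStep A (prefixOf c τ))^[k] x₀ ∈ S := by
  obtain ⟨hk1, hkR⟩ := hk
  obtain ⟨k, rfl⟩ : ∃ k', k = k' + 1 := ⟨k - 1, by omega⟩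
  rw [Function.iterate_succ_apply']
  exact pathStep_mem A hA (iterate_pathStep_mem_range A (by omega))

/-- Each edge of the alternating path is the assignment of a distinct client. -/
theorem sum_dist_iterate_pathStep_le_matchingCost (hA : IsMatching S τ (A τ (prefixOf c τ)))
    (hx₀ : x₀ ∉ S) :
    ∑ k ∈ range (exitTime A (prefixOf c τ) x₀),
        dist ((pathStep A (prefixOf c τ))^[k] x₀) ((pathStep A (prefixOf c τ))^[k + 1] x₀) ≤
      matchingCost τ c (A τ (prefixOf c τ)) := by
  set cp := prefixOf c τ
  set g := pathStep A cp
  set ι := fun k => clientIndex cp (g^[k] x₀)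
  have hι : ∀ k ∈ range (exitTime A cp x₀), ι k ∈ Set.Icc 1 τ ∧ c (ι k) = g^[k] x₀ :=
    fun k hk => clientIndex_prefixOf (iterate_pathStep_mem_range A (mem_range.1 hk))
  have hιinj : Set.InjOn ι (range (exitTime A cp x₀)) := fun k hk l hl h =>
    injOn_iterate_pathStep A hA hx₀ (Set.mem_Iic.2 (mem_range.1 hk).le)
      (Set.mem_Iic.2 (mem_range.1 hl).le)
      (show g^[k] x₀ = g^[l] x₀ by rw [← (hι k hk).2, ← (hι l hl).2, h])
  calc ∑ k ∈ range (exitTime A cp x₀), dist (g^[k] x₀) (g^[k + 1] x₀)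
      = ∑ k ∈ range (exitTime A cp x₀), dist (c (ι k)) (A τ cp (ι k)) :=
        sum_congr rfl fun k hk => by rw [Function.iterate_succ_apply', (hι k hk).2]; rfl
    _ = ∑ j ∈ (range (exitTime A cp x₀)).image ι, dist (c j) (A τ cp j) :=
        by rw [sum_image hιinj]
    _ ≤ matchingCost τ c (A τ cp) :=
        sum_le_sum_of_subset_of_nonneg
          (image_subset_iff.2 fun k hk => mem_Icc.2 (hι k hk).1) fun _ _ _ => dist_nonneg

end AlternatingPath

section Adversary

variable {X : Type*} (A : (t : ℕ) → (Fin t → X) → ℕ → X) (x₀ : X)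

/-- The value at `0` is never requested; `adversary A x₀ 1 = x₀` since with no clients yet the
path exits at once. -/
noncomputable def adversary : ℕ → X
  | 0 => x₀
  | τ + 1 => pathExit A (fun i : Fin τ => adversary (i + 1)) x₀

theorem adversary_succ (τ : ℕ) :
    adversary A x₀ (τ + 1) = pathExit A (prefixOf (adversary A x₀) τ) x₀ := by
  rw [adversary]
  rfl

theorem adversary_one : adversary A x₀ 1 = x₀ := by
  rw [adversary_succ, pathExit, exitTime, Nat.sInf_eq_zero.2 (.inl (by simp)),
    Function.iterate_zero_apply]

theorem mem_range_prefixOf_adversary {τ : ℕ} (hτ : 1 ≤ τ) :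
    x₀ ∈ Set.range (prefixOf (adversary A x₀) τ) := by
  rw [range_prefixOf]
  exact ⟨1, ⟨le_rfl, hτ⟩, adversary_one A x₀⟩

variable [MetricSpace X] {S : Finset X} {x₀}

theorem adversary_mem (hA : ∀ t ≤ S.card, ∀ cp, IsMatching S t (A t cp)) (hx₀ : x₀ ∉ S)
    {j : ℕ} (hj : j ∈ Set.Icc 2 (S.card + 1)) : adversary A x₀ j ∈ S := by
  obtain ⟨hj2, hjS⟩ := hj
  obtain ⟨τ, rfl⟩ : ∃ τ, j = τ + 1 := ⟨j - 1, by omega⟩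
  have hAτ := hA τ (by omega) (prefixOf (adversary A x₀) τ)
  rw [adversary_succ]
  exact iterate_pathStep_mem A hAτ
    ⟨exitTime_pos A hAτ hx₀ (mem_range_prefixOf_adversary A x₀ (by omega)), le_rfl⟩

theorem adversary_injOn (hA : ∀ t ≤ S.card, ∀ cp, IsMatching S t (A t cp)) (hx₀ : x₀ ∉ S)
    {m : ℕ} (hm : m ≤ S.card) : Set.InjOn (adversary A x₀) (Set.Icc 1 m) :=
  injOn_Icc_of_succ_notMem_image fun τ hτ => by
    rw [adversary_succ, ← range_prefixOf]
    exact pathExit_notMem A (hA τ (by omega) _) hx₀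

theorem sub_one_le_pow_of_exitTime_le (hA : ∀ t ≤ S.card, ∀ cp, IsMatching S t (A t cp))
    (hx₀ : x₀ ∉ S) {m C K : ℕ} (hm : m ≤ S.card)
    (hrec : ∀ j, 1 ≤ j → j ≤ m →
      ((fun t => A t (prefixOf (adversary A x₀) t) j) '' Set.Icc j m).ncard ≤ C)
    (hK : ∀ τ ∈ Ico 1 m, exitTime A (prefixOf (adversary A x₀) τ) x₀ ≤ K) :
    m - 1 ≤ (C + 1) ^ K := by
  classical
  set c := adversary A x₀
  have hc : Set.InjOn c (Set.Icc 1 m) := adversary_injOn A hA hx₀ hm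
  set V : X → Finset X := fun x => ((Icc 1 m).filter (c · = x)).biUnion fun j =>
    (Icc j m).image fun t => A t (prefixOf c t) j
  have hV : ∀ x, #(V x) ≤ C := fun x => calc
    #(V x) ≤ #((Icc 1 m).filter (c · = x)) * C :=
      card_biUnion_le_card_mul _ _ _ fun j hj => by
        obtain ⟨hj, -⟩ := mem_filter.1 hj
        rw [← Set.ncard_coe_finset, coe_image, coe_Icc]
        exact hrec j (mem_Icc.1 hj).1 (mem_Icc.1 hj).2
    _ ≤ 1 * C := Nat.mul_le_mul_right _ <| card_le_one.2 fun a ha b hb => by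
      rw [mem_filter] at ha hb
      exact hc (mem_Icc.1 ha.1) (mem_Icc.1 hb.1) (ha.2.trans hb.2.symm)
    _ = C := one_mul C
  have hwalk : ∀ τ ∈ Ico 1 m, ∀ k < exitTime A (prefixOf c τ) x₀,
      (pathStep A (prefixOf c τ))^[k + 1] x₀ ∈ V ((pathStep A (prefixOf c τ))^[k] x₀) := by
    intro τ hτ k hk
    obtain ⟨hj, hcj⟩ := clientIndex_prefixOf (iterate_pathStep_mem_range A hk)
    rw [mem_Ico] at hτ
    rw [Function.iterate_succ_apply']
    exact mem_biUnion.2 ⟨_, mem_filter.2 ⟨mem_Icc.2 ⟨hj.1, by grind⟩, hcj⟩,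
      mem_image.2 ⟨τ, mem_Icc.2 ⟨hj.2, hτ.2.le⟩, rfl⟩⟩
  have hmaps : Set.MapsTo (fun τ => c (τ + 1)) (Ico 1 m) (reachWithin V x₀ K) := fun τ hτ => by
    simp only [c, adversary_succ, pathExit]
    exact reachWithin_mono V x₀ (hK τ hτ) <| mem_reachWithin_of_walk V x₀
      (p := fun k => (pathStep A (prefixOf c τ))^[k] x₀) rfl (hwalk τ hτ)
  have hinj : Set.InjOn (fun τ => c (τ + 1)) (Ico 1 m) := fun a ha b hb h => by
    rw [coe_Ico] at ha hb
    have := hc ⟨by omega, ha.2⟩ ⟨by omega, hb.2⟩ h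
    omega
  calc m - 1 = #(Ico 1 m) := (Nat.card_Ico 1 m).symm
    _ ≤ #(reachWithin V x₀ K) := card_le_card_of_injOn _ hmaps hinj
    _ ≤ (C + 1) ^ K := card_reachWithin_le V x₀ hV K

end Adversary

theorem OPT_eq_of_dist_eq {X : Type*} [MetricSpace X] {S : Finset X} {t : ℕ} {c : ℕ → X}
    {r : ℝ} (ht : 1 ≤ t) (htS : t ≤ S.card) (hr : ∀ s ∈ S, dist (c 1) s = r)
    (hcS : ∀ j ∈ Set.Icc 2 t, c j ∈ S) (hc : Set.InjOn c (Set.Icc 2 t)) : OPT S t c = r := by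
  classical
  have h1 : 1 ∈ Icc 1 t := mem_Icc.2 ⟨le_rfl, ht⟩
  refine IsLeast.csInf_eq ⟨?_, ?_⟩
  · -- the first client goes to a server not occupied by the others, and they stay in place
    obtain ⟨s, hs, hsc⟩ := exists_mem_notMem_of_card_lt_card
      (s := (Icc 2 t).image c) (t := S) ((card_image_le.trans_eq (Nat.card_Icc 2 t)).trans_lt
        (by omega))
    have hsc' : ∀ j ∈ Set.Icc 2 t, c j ≠ s := fun j hj h =>
      hsc (mem_image.2 ⟨j, mem_Icc.2 hj, h⟩)
    refine ⟨Function.update c 1 s, ⟨fun a ha b hb h => ?_, fun j hj => ?_⟩, ?_⟩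
    · rcases eq_or_ne a 1 with rfl | ha1 <;> rcases eq_or_ne b 1 with rfl | hb1
      · rfl
      · rw [Function.update_self, Function.update_of_ne hb1] at h
        exact absurd h.symm (hsc' b ⟨by grind, hb.2⟩)
      · rw [Function.update_self, Function.update_of_ne ha1] at h
        exact absurd h (hsc' a ⟨by grind, ha.2⟩)
      · rw [Function.update_of_ne ha1, Function.update_of_ne hb1] at h
        exact hc ⟨by grind, ha.2⟩ ⟨by grind, hb.2⟩ h
    · rcases eq_or_ne j 1 with rfl | hj1
      · simpa using hs
      · simpa [hj1] using hcS j ⟨by grind, hj.2⟩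
    · rw [matchingCost, sum_eq_single_of_mem 1 h1 fun j _ hj => by simp [hj]]
      simpa using hr s hs
  · rintro _ ⟨f, hf, rfl⟩
    calc r = dist (c 1) (f 1) := (hr _ (hf.2 1 ⟨le_rfl, ht⟩)).symm
      _ ≤ matchingCost t c f := single_le_sum (fun j _ => dist_nonneg) h1

theorem log_div_log_sub_one_le {n C K : ℕ} (hC : 1 ≤ C) (hn : n ≤ (C + 1) ^ K + 1) :
    Real.log n / Real.log ((C : ℝ) + 1) - 1 ≤ K := by
  have hlog : 0 < Real.log ((C : ℝ) + 1) := Real.log_pos (by norm_cast; omega)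
  have hpow : (n : ℝ) ≤ ((C : ℝ) + 1) ^ (K + 1) := by
    have : n ≤ (C + 1) ^ (K + 1) :=
      hn.trans (by rw [pow_succ]; nlinarith [Nat.one_le_pow K (C + 1) (by omega)])
    exact_mod_cast this
  rw [sub_le_iff_le_add, div_le_iff₀ hlog]
  rcases n.eq_zero_or_pos with rfl | hpos
  · simp only [CharP.cast_eq_zero, Real.log_zero]
    positivity
  · calc Real.log n ≤ Real.log (((C : ℝ) + 1) ^ (K + 1)) :=
          Real.log_le_log (by exact_mod_cast hpos) hpow
      _ = (K + 1) * Real.log ((C : ℝ) + 1) := by rw [Real.log_pow]; push_cast; ring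

section Star

variable {X : Type*} {n : ℕ} {v : Fin (n + 1) → X} {S : Finset X}

theorem star_center_notMem (hv : Function.Injective v)
    (hS : ∀ x, x ∈ S ↔ ∃ i : Fin (n + 1), i ≠ 0 ∧ x = v i) : v 0 ∉ S := by
  rw [hS]
  rintro ⟨i, hi, h⟩
  exact hi (hv h).symm

theorem star_card_servers (hv : Function.Injective v)
    (hS : ∀ x, x ∈ S ↔ ∃ i : Fin (n + 1), i ≠ 0 ∧ x = v i) : S.card = n := by
  classical
  have : S = (univ.erase 0).image v := by
    ext x
    simp [hS, eq_comm]
  rw [this, card_image_of_injective _ hv, card_erase_of_mem (mem_univ _), card_univ,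
    Fintype.card_fin, Nat.add_sub_cancel]

variable [MetricSpace X]

theorem star_vertex_injective (hd1 : ∀ i : Fin (n + 1), i ≠ 0 → dist (v 0) (v i) = 1)
    (hd2 : ∀ i j : Fin (n + 1), i ≠ 0 → j ≠ 0 → i ≠ j → dist (v i) (v j) = 2) :
    Function.Injective v := by
  intro i j h
  by_contra hij
  rcases eq_or_ne i 0 with rfl | hi
  · simpa [h] using hd1 j (Ne.symm hij)
  rcases eq_or_ne j 0 with rfl | hj
  · simpa [h] using hd1 i hi
  · simpa [h] using hd2 i j hi hj hij

theorem dist_star_center (hd1 : ∀ i : Fin (n + 1), i ≠ 0 → dist (v 0) (v i) = 1)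
    (hS : ∀ x, x ∈ S ↔ ∃ i : Fin (n + 1), i ≠ 0 ∧ x = v i) {s : X} (hs : s ∈ S) :
    dist (v 0) s = 1 := by
  obtain ⟨i, hi, rfl⟩ := (hS s).1 hs
  exact hd1 i hi

theorem le_sum_dist_star_path (hd1 : ∀ i : Fin (n + 1), i ≠ 0 → dist (v 0) (v i) = 1)
    (hd2 : ∀ i j : Fin (n + 1), i ≠ 0 → j ≠ 0 → i ≠ j → dist (v i) (v j) = 2)
    (hS : ∀ x, x ∈ S ↔ ∃ i : Fin (n + 1), i ≠ 0 ∧ x = v i) {p : ℕ → X} {R : ℕ}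
    (hp0 : p 0 = v 0) (hpS : ∀ k ∈ Set.Icc 1 R, p k ∈ S) (hp : Set.InjOn p (Set.Iic R)) :
    2 * (R : ℝ) - 1 ≤ ∑ k ∈ range R, dist (p k) (p (k + 1)) := by
  induction R with
  | zero => norm_num
  | succ R ih =>
    have ih := ih (fun k hk => hpS k ⟨hk.1, by grind⟩)
      (hp.mono (Set.Iic_subset_Iic.2 R.le_succ))
    rw [sum_range_succ]
    push_cast
    rcases R.eq_zero_or_pos with rfl | hR
    · rw [hp0, dist_star_center hd1 hS (hpS 1 ⟨le_rfl, le_rfl⟩)]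
      norm_num
    · obtain ⟨i, hi, hpi⟩ := (hS _).1 (hpS R ⟨hR, R.le_succ⟩)
      obtain ⟨j, hj, hpj⟩ := (hS _).1 (hpS (R + 1) ⟨by omega, le_rfl⟩)
      have hij : i ≠ j := fun h => by
        have := hp (Set.mem_Iic.2 R.le_succ) (Set.mem_Iic.2 le_rfl) (by rw [hpi, hpj, h])
        omega
      rw [hpi, hpj, hd2 i j hi hj hij]
      linarith

theorem two_mul_exitTime_sub_one_le_matchingCost
    (hd1 : ∀ i : Fin (n + 1), i ≠ 0 → dist (v 0) (v i) = 1)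
    (hd2 : ∀ i j : Fin (n + 1), i ≠ 0 → j ≠ 0 → i ≠ j → dist (v i) (v j) = 2)
    (hS : ∀ x, x ∈ S ↔ ∃ i : Fin (n + 1), i ≠ 0 ∧ x = v i) (hv0 : v 0 ∉ S)
    (A : (t : ℕ) → (Fin t → X) → ℕ → X) {τ : ℕ} {c : ℕ → X}
    (hA : IsMatching S τ (A τ (prefixOf c τ))) :
    2 * (exitTime A (prefixOf c τ) (v 0) : ℝ) - 1 ≤ matchingCost τ c (A τ (prefixOf c τ)) :=
  (le_sum_dist_star_path hd1 hd2 hS rfl (fun _ hk => iterate_pathStep_mem A hA hk)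
    (injOn_iterate_pathStep A hA hv0)).trans (sum_dist_iterate_pathStep_le_matchingCost A hA hv0)

end Star

/-- Lower bound on the star metric: let `X` contain the points `v 0, v 1, …, v n` of the star
metric (`dist (v 0) (v i) = 1` for `i ≠ 0`, `dist (v i) (v j) = 2` for distinct nonzero
`i, j`), let the server set be `S = {v 1, …, v n}`, and let `A` be a deterministic online
matching algorithm for `S` with per-client recourse at most `C` (for every client sequence of
length `m ≤ n` and every client index `j ≤ m`, the set of servers client `j` is ever matched
to has cardinality at most `C`).  Then there are `m ≤ n`, a sequence of `m` pairwise distinct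
points of the star with `c 1 = v 0`, and a time `t ≤ m` at which the algorithm's matching has
cost at least `log n / log (C+1) − 1`, while `OPT_t = 1`. -/
theorem stmt1 {X : Type*} [MetricSpace X] (n : ℕ) (hn : 2 ≤ n)
    (v : Fin (n + 1) → X)
    (hd1 : ∀ i : Fin (n + 1), i ≠ 0 → dist (v 0) (v i) = 1)
    (hd2 : ∀ i j : Fin (n + 1), i ≠ 0 → j ≠ 0 → i ≠ j → dist (v i) (v j) = 2)
    (S : Finset X) (hS : ∀ x, x ∈ S ↔ ∃ i : Fin (n + 1), i ≠ 0 ∧ x = v i)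
    (C : ℕ) (hC : 1 ≤ C)
    (A : (t : ℕ) → (Fin t → X) → (ℕ → X))
    (hA : ∀ t, t ≤ S.card → ∀ cp : Fin t → X, IsMatching S t (A t cp))
    (hrec : ∀ c : ℕ → X, ∀ m, m ≤ n → ∀ j, 1 ≤ j → j ≤ m →
        ((fun t => A t (prefixOf c t) j) '' Set.Icc j m).ncard ≤ C) :
    ∃ m, m ≤ n ∧ ∃ c : ℕ → X,
      c 1 = v 0 ∧ Set.InjOn c (Set.Icc 1 m) ∧
      (∀ j ∈ Set.Icc 1 m, c j ∈ Set.range v) ∧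
      ∃ t, 1 ≤ t ∧ t ≤ m ∧
        Real.log n / Real.log ((C : ℝ) + 1) - 1 ≤ matchingCost t c (A t (prefixOf c t)) ∧
        OPT S t c = 1 := by
  have hv := star_vertex_injective hd1 hd2
  have hSn := star_card_servers hv hS
  have hv0 := star_center_notMem hv hS
  set c := adversary A (v 0)
  have hc := adversary_injOn A hA hv0 hSn.ge
  have hcS : ∀ j ∈ Set.Icc 2 n, c j ∈ S := fun j hj =>
    adversary_mem A hA hv0 ⟨hj.1, by grind⟩
  obtain ⟨τ, hτ, hmax⟩ := (Ico 1 n).exists_max_image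
    (fun τ => exitTime A (prefixOf c τ) (v 0)) ⟨1, mem_Ico.2 ⟨le_rfl, by omega⟩⟩
  obtain ⟨hτ1, hτn⟩ := mem_Ico.1 hτ
  have hAτ := hA τ (by omega) (prefixOf c τ)
  set K := exitTime A (prefixOf c τ) (v 0)
  have hK : 1 ≤ K := exitTime_pos A hAτ hv0 (mem_range_prefixOf_adversary A (v 0) hτ1)
  have hcount := sub_one_le_pow_of_exitTime_le A hA hv0 hSn.ge (hrec c n le_rfl) hmax
  refine ⟨n, le_rfl, c, adversary_one A _, hc, fun j hj => ?_, τ, hτ1, hτn.le, ?_, ?_⟩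
  · rcases eq_or_ne j 1 with rfl | hj1
    · exact ⟨0, (adversary_one A _).symm⟩
    · obtain ⟨i, -, hi⟩ := (hS _).1 (hcS j ⟨by grind, hj.2⟩)
      exact ⟨i, hi.symm⟩
  · have hlog := log_div_log_sub_one_le (n := n) (K := K) hC (by omega)
    have hcost := two_mul_exitTime_sub_one_le_matchingCost hd1 hd2 hS hv0 A hAτ
    have : (1 : ℝ) ≤ K := Nat.one_le_cast.2 hK
    linarith
  · exact OPT_eq_of_dist_eq hτ1 (by omega)
      (fun s hs => (congrArg (dist · s) (adversary_one A _)).trans (dist_star_center hd1 hS hs))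
      (fun j hj => hcS j ⟨hj.1, by grind⟩) (hc.mono (Set.Icc_subset_Icc (by norm_num) (by omega)))
end

section
/- Let d ≥ 2 be an integer. For every metric space (X,δ) and every finite server set S ⊆ X with |S| = k ≥ 1, there exists a deterministic online matching algorithm A for S such that for every sequence of clients c_1,…,c_k ∈ X: (i) for every t ∈ {1,…,k}, the cost of the matching A(c_1,…,c_t) is at most (2(d−1)·⌈log_d(t+1)⌉ − 1) times OPT_t, and (ii) every client index j is reassigned at most ⌊log_d k⌋ times over the whole sequence. -/
open Set

section Matchings

variable {X : Type*} [MetricSpace X] {S : Finset X} {t u : ℕ} {c c' f g : ℕ → X}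

def IsOptimal (S : Finset X) (t : ℕ) (c f : ℕ → X) : Prop :=
  IsMatching S t f ∧ matchingCost t c f = OPT S t c

lemma IsMatching.mono (htu : t ≤ u) (hf : IsMatching S u f) : IsMatching S t f :=
  ⟨hf.1.mono (Icc_subset_Icc_right htu), fun j hj => hf.2 j (Icc_subset_Icc_right htu hj)⟩

lemma isMatching_zero : IsMatching S 0 f :=
  ⟨fun a ha => by simp at ha, fun j hj => by simp at hj⟩

lemma matchingCost_nonneg : 0 ≤ matchingCost t c f :=
  Finset.sum_nonneg fun _ _ => dist_nonneg

lemma matchingCost_zero : matchingCost 0 c f = 0 := by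
  simp [matchingCost]

lemma matchingCost_mono (htu : t ≤ u) : matchingCost t c f ≤ matchingCost u c f :=
  Finset.sum_le_sum_of_subset_of_nonneg (Finset.Icc_subset_Icc_right htu)
    fun _ _ _ => dist_nonneg

lemma matchingCost_succ :
    matchingCost (t + 1) c f = matchingCost t c f + dist (c (t + 1)) (f (t + 1)) :=
  Finset.sum_Icc_succ_top (by omega) _

lemma matchingCost_eq_add_sum_Ioc (htu : t ≤ u) :
    matchingCost u c f = matchingCost t c f + ∑ j ∈ Finset.Ioc t u, dist (c j) (f j) := by
  have hIcc : ∀ n, Finset.Icc 1 n = Finset.Ioc 0 n := Finset.Icc_add_one_left_eq_Ioc 0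
  simp only [matchingCost, hIcc]
  exact (Finset.sum_Ioc_consecutive _ (Nat.zero_le t) htu).symm

lemma matchingCost_congr (h : EqOn c c' (Icc 1 t)) : matchingCost t c f = matchingCost t c' f :=
  Finset.sum_congr rfl fun j hj => by rw [h (by simpa using hj)]

lemma OPT_congr (h : EqOn c c' (Icc 1 t)) : OPT S t c = OPT S t c' := by
  simp only [OPT, matchingCost_congr h]

lemma OPT_nonneg : 0 ≤ OPT S t c :=
  Real.sInf_nonneg (by rintro _ ⟨f, -, rfl⟩; exact matchingCost_nonneg)

lemma OPT_le_matchingCost (hf : IsMatching S t f) : OPT S t c ≤ matchingCost t c f :=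
  csInf_le ⟨0, by rintro _ ⟨g, -, rfl⟩; exact matchingCost_nonneg⟩ ⟨f, hf, rfl⟩

lemma OPT_zero : OPT S 0 c = 0 :=
  le_antisymm ((OPT_le_matchingCost (isMatching_zero (f := c))).trans_eq matchingCost_zero)
    OPT_nonneg

lemma isOptimal_zero : IsOptimal S 0 c f :=
  ⟨isMatching_zero, matchingCost_zero.trans OPT_zero.symm⟩

lemma isOptimal_congr (h : EqOn c c' (Icc 1 t)) : IsOptimal S t c = IsOptimal S t c' := by
  ext f
  rw [IsOptimal, IsOptimal, matchingCost_congr h, OPT_congr h]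

lemma exists_isMatching [Nonempty X] (ht : t ≤ S.card) : ∃ f, IsMatching S t f := by
  let e : Fin t ↪ S := (Fin.castLEEmb ht).trans S.equivFin.symm.toEmbedding
  refine ⟨fun j => if h : j - 1 < t then e ⟨j - 1, h⟩ else Classical.arbitrary X, ?_, ?_⟩
  · intro a ha b hb hab
    simp only [mem_Icc] at ha hb
    simp only [dif_pos (show a - 1 < t by omega), dif_pos (show b - 1 < t by omega),
      Subtype.coe_inj, e.injective.eq_iff, Fin.mk.injEq] at hab
    omega
  · intro j hj
    simp only [mem_Icc] at hj
    simp only [dif_pos (show j - 1 < t by omega), Finset.coe_mem]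

lemma exists_isOptimal [Nonempty X] (ht : t ≤ S.card) (c : ℕ → X) : ∃ f, IsOptimal S t c f := by
  -- the cost of a matching only depends on its restriction `Icc 1 t → S`, so finitely many
  -- values occur and the infimum is attained
  set V := {r | ∃ f, IsMatching S t f ∧ matchingCost t c f = r}
  have hfin : V.Finite := by
    refine (finite_range fun φ : Finset.Icc 1 t → S =>
      ∑ j : Finset.Icc 1 t, dist (c j) (φ j)).subset ?_
    rintro _ ⟨f, hf, rfl⟩
    exact ⟨fun j => ⟨f j, hf.2 j (Finset.mem_Icc.mp j.2)⟩,
      Finset.sum_coe_sort (Finset.Icc 1 t) fun j => dist (c j) (f j)⟩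
  obtain ⟨f, hf⟩ := exists_isMatching ht
  exact (Set.Nonempty.csInf_mem ⟨_, f, hf, rfl⟩ hfin : sInf V ∈ V)

lemma OPT_mono [Nonempty X] (htu : t ≤ u) (hu : u ≤ S.card) : OPT S t c ≤ OPT S u c := by
  obtain ⟨f, hf, hfc⟩ := exists_isOptimal hu c
  calc OPT S t c ≤ matchingCost t c f := OPT_le_matchingCost (hf.mono htu)
    _ ≤ matchingCost u c f := matchingCost_mono htu
    _ = OPT S u c := hfc

end Matchings

lemma Set.InjOn.piecewise {α β : Type*} {f g : α → β} {s T : Set α} [∀ j, Decidable (j ∈ T)]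
    (hf : InjOn f (s ∩ T)) (hg : InjOn g (s \ T)) (hfg : ∀ a ∈ s ∩ T, ∀ b ∈ s \ T, f a ≠ g b) :
    InjOn (T.piecewise f g) s := by
  intro a ha b hb hab
  by_cases haT : a ∈ T <;> by_cases hbT : b ∈ T <;>
    simp only [Set.piecewise, haT, hbT, ↓reduceIte] at hab
  · exact hf ⟨ha, haT⟩ ⟨hb, hbT⟩ hab
  · exact absurd hab (hfg a ⟨ha, haT⟩ b ⟨hb, hbT⟩)
  · exact absurd hab.symm (hfg b ⟨hb, hbT⟩ a ⟨ha, haT⟩)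
  · exact hg ⟨ha, haT⟩ ⟨hb, hbT⟩ hab

section Exchange

open Classical

variable {X : Type*} {t u : ℕ} {f g : ℕ → X}

lemma exists_exchange_set {j₀ : ℕ} (hg : InjOn g (Icc 1 u)) (htu : t ≤ u) (hj₀ : j₀ ∈ Icc 1 t)
    (hj₀g : f j₀ ∉ g '' Icc 1 u) :
    ∃ T ⊆ Icc 1 t, j₀ ∈ T ∧ (∀ a ∈ T, ∀ b ∈ Icc 1 t, g a = f b → b ∈ T) ∧
      ∀ a ∈ T, ∀ b ∈ Icc 1 u, f a = g b → b ∈ T := by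
  let R : ℕ → ℕ → Prop := fun a b => b ∈ Icc 1 t ∧ g a = f b
  have hT : {j | Relation.ReflTransGen R j₀ j} ⊆ Icc 1 t := fun j hj => by
    induction hj with
    | refl => exact hj₀
    | tail _ hR => exact hR.1
  refine ⟨_, hT, .refl, fun a ha b hb hab => ha.tail ⟨hb, hab⟩, fun a ha b hb hab => ?_⟩
  rcases ha.cases_tail with rfl | ⟨p, hp, hpa, hgp⟩
  · exact absurd ⟨b, hb, hab.symm⟩ hj₀g
  · have : p = b := hg (Icc_subset_Icc_right htu (hT hp)) hb (hgp.trans hab)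
    exact this ▸ hp

lemma diff_image_piecewise_subset {T : Set ℕ} (htu : t ≤ u) (hT : T ⊆ Icc 1 t)
    (hfwd : ∀ a ∈ T, ∀ b ∈ Icc 1 t, g a = f b → b ∈ T) :
    f '' Icc 1 t \ T.piecewise f g '' Icc 1 u ⊆ (f '' Icc 1 t \ g '' Icc 1 u) \ f '' T := by
  have hTu : T ⊆ Icc 1 u := hT.trans (Icc_subset_Icc_right htu)
  rintro _ ⟨⟨a, ha, rfl⟩, hnot⟩
  refine ⟨⟨⟨a, ha, rfl⟩, ?_⟩, ?_⟩
  · rintro ⟨p, hp, hpa⟩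
    by_cases hpT : p ∈ T
    · exact hnot ⟨a, Icc_subset_Icc_right htu ha,
        piecewise_eq_of_mem _ _ _ (hfwd p hpT a ha hpa)⟩
    · exact hnot ⟨p, hp, (piecewise_eq_of_notMem _ _ _ hpT).trans hpa⟩
  · rintro ⟨b, hb, hba⟩
    exact hnot ⟨b, hTu hb, (piecewise_eq_of_mem _ _ _ hb).trans hba⟩

end Exchange

section OptimalExtension

open Classical

variable {X : Type*} [MetricSpace X] {S : Finset X} {t u : ℕ} {c f g : ℕ → X}

lemma matchingCost_piecewise (T : Set ℕ) :
    matchingCost t c (T.piecewise f g) = matchingCost t c g +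
      ∑ j ∈ (Finset.Icc 1 t).filter (· ∈ T), (dist (c j) (f j) - dist (c j) (g j)) := by
  rw [matchingCost, matchingCost, Finset.sum_filter, ← Finset.sum_add_distrib]
  refine Finset.sum_congr rfl fun j _ => ?_
  by_cases hj : j ∈ T <;> simp [hj]

lemma isMatching_piecewise {T : Set ℕ} (hf : IsMatching S t f) (hg : IsMatching S u g)
    (hT : T ⊆ Icc 1 t) (hfg : ∀ a ∈ T, ∀ b ∈ Icc 1 u, f a = g b → b ∈ T) :
    IsMatching S u (T.piecewise f g) := by
  refine ⟨InjOn.piecewise (hf.1.mono fun j hj => hT hj.2) (hg.1.mono sdiff_subset)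
    fun a ha b hb hab => hb.2 (hfg a ha.2 b hb.1 hab), fun j hj => ?_⟩
  by_cases hjT : j ∈ T
  · rw [piecewise_eq_of_mem _ _ _ hjT]; exact hf.2 j (hT hjT)
  · rw [piecewise_eq_of_notMem _ _ _ hjT]; exact hg.2 j hj

/-- Swapping `f` and `g` on `T` leaves the total cost of the pair unchanged and yields a matching
`T.piecewise g f` of `t` clients, which by optimality of `f` costs at least as much as `f`. -/
lemma exchange {T : Set ℕ} (hf : IsOptimal S t c f) (hg : IsMatching S u g) (htu : t ≤ u)
    (hT : T ⊆ Icc 1 t) (hfwd : ∀ a ∈ T, ∀ b ∈ Icc 1 t, g a = f b → b ∈ T)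
    (hback : ∀ a ∈ T, ∀ b ∈ Icc 1 u, f a = g b → b ∈ T) :
    IsMatching S u (T.piecewise f g) ∧
      matchingCost u c (T.piecewise f g) ≤ matchingCost u c g := by
  have hTu : T ⊆ Icc 1 u := hT.trans (Icc_subset_Icc_right htu)
  have hf' : IsMatching S t (T.piecewise g f) :=
    isMatching_piecewise (hg.mono htu) hf.1 hT fun a ha b hb hab => hfwd a ha b hb hab
  refine ⟨isMatching_piecewise hf.1 hg hT hback, ?_⟩
  have hfilter : (Finset.Icc 1 u).filter (· ∈ T) = (Finset.Icc 1 t).filter (· ∈ T) := by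
    ext j
    simp only [Finset.mem_filter, Finset.mem_Icc]
    exact ⟨fun h => ⟨hT h.2, h.2⟩, fun h => ⟨hTu h.2, h.2⟩⟩
  have hopt := hf.2 ▸ OPT_le_matchingCost (c := c) hf'
  rw [matchingCost_piecewise, Finset.sum_sub_distrib] at hopt
  rw [matchingCost_piecewise, hfilter, Finset.sum_sub_distrib]
  linarith

/-- Take an optimal `g` missing as few servers of `f` as possible; if it missed `f j₀`, the
exchange on the alternating closure of `j₀` would give an optimal matching missing fewer. -/
lemma exists_isOptimal_image_subset [Nonempty X] (hf : IsOptimal S t c f) (htu : t ≤ u)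
    (hu : u ≤ S.card) : ∃ g, IsOptimal S u c g ∧ f '' Icc 1 t ⊆ g '' Icc 1 u := by
  let missed : (ℕ → X) → Set X := fun g => f '' Icc 1 t \ g '' Icc 1 u
  have hfin : ∀ g, (missed g).Finite := fun g => ((finite_Icc 1 t).image f).sdiff
  obtain ⟨g₀, hg₀⟩ := exists_isOptimal hu c
  obtain ⟨g, hg, hmin⟩ :=
    exists_minimalFor_of_wellFoundedLT (IsOptimal S u c) (fun g => (missed g).ncard) ⟨g₀, hg₀⟩
  refine ⟨g, hg, fun s hs => by_contra fun hsg => ?_⟩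
  obtain ⟨j₀, hj₀, rfl⟩ := hs
  obtain ⟨T, hT, hj₀T, hfwd, hback⟩ := exists_exchange_set hg.1.1 htu hj₀ hsg
  obtain ⟨hg₁, hcost⟩ := exchange hf hg.1 htu hT hfwd hback
  have hopt : IsOptimal S u c (T.piecewise f g) :=
    ⟨hg₁, le_antisymm (hcost.trans_eq hg.2) (OPT_le_matchingCost hg₁)⟩
  have hssub : missed (T.piecewise f g) ⊂ missed g :=
    (diff_image_piecewise_subset htu hT hfwd).trans_ssubset <|
      (sdiff_subset_sdiff_right (singleton_subset_iff.mpr (mem_image_of_mem f hj₀T))).trans_ssubset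
      (sdiff_singleton_ssubset.mpr ⟨⟨j₀, hj₀, rfl⟩, hsg⟩)
  have hlt := Set.ncard_lt_ncard hssub (hfin g)
  exact hlt.not_ge (hmin hopt hlt.le)

end OptimalExtension

section Chain

variable {X : Type*} [MetricSpace X] [Nonempty X] (S : Finset X)

noncomputable def optChain (c : ℕ → X) : ℕ → ℕ → X
  | 0 => Classical.arbitrary _
  | i + 1 => Classical.epsilon fun g =>
      IsOptimal S (i + 1) c g ∧ optChain c i '' Icc 1 i ⊆ g '' Icc 1 (i + 1)

variable {S} {c c' : ℕ → X}

lemma isOptimal_optChain : ∀ {i}, i ≤ S.card → IsOptimal S i c (optChain S c i)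
  | 0, _ => isOptimal_zero
  | i + 1, hi => (Classical.epsilon_spec
      (exists_isOptimal_image_subset (isOptimal_optChain (by omega)) i.le_succ hi)).1

lemma image_optChain_subset_succ {i : ℕ} (hi : i + 1 ≤ S.card) :
    optChain S c i '' Icc 1 i ⊆ optChain S c (i + 1) '' Icc 1 (i + 1) :=
  (Classical.epsilon_spec
    (exists_isOptimal_image_subset (isOptimal_optChain (by omega)) i.le_succ hi)).2

lemma image_optChain_subset {i i' : ℕ} (hii' : i ≤ i') (hi' : i' ≤ S.card) :
    optChain S c i '' Icc 1 i ⊆ optChain S c i' '' Icc 1 i' := by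
  induction i', hii' using Nat.le_induction with
  | base => rfl
  | succ i' _ ih => exact (ih (by omega)).trans (image_optChain_subset_succ hi')

lemma optChain_congr : ∀ {i}, EqOn c c' (Icc 1 i) → optChain S c i = optChain S c' i
  | 0, _ => rfl
  | i + 1, h => by
    rw [optChain, optChain, optChain_congr (h.mono (Icc_subset_Icc_right i.le_succ)),
      isOptimal_congr h]

end Chain

lemma mem_diff_image_Icc_succ {X : Type*} {f g : ℕ → X} {s : ℕ} {A : Set ℕ} {y : X}
    (hy : y ∈ g '' A \ f '' Icc 1 s) (hne : y ≠ f (s + 1)) :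
    y ∈ g '' A \ f '' Icc 1 (s + 1) := by
  refine ⟨hy.1, ?_⟩
  rintro ⟨a, ⟨ha₁, ha₂⟩, rfl⟩
  rcases ha₂.lt_or_eq with ha₂ | rfl
  · exact hy.2 ⟨a, ⟨ha₁, by omega⟩, rfl⟩
  · exact hne rfl

lemma sum_Ioc_eq_add_sum_Ioc_succ {M : Type*} [AddCommMonoid M] (F : ℕ → M) {s t : ℕ}
    (hst : s < t) :
    ∑ j ∈ Finset.Ioc s t, F j = F (s + 1) + ∑ j ∈ Finset.Ioc (s + 1) t, F j := by
  rw [← Finset.insert_Ioc_add_one_left_eq_Ioc hst, Finset.sum_insert (by simp)]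

section BlockAssignment

variable {X : Type*} [MetricSpace X] {c f g h : ℕ → X} {s t : ℕ}

def IsBlockAssignment (c f g : ℕ → X) (s t : ℕ) (h : ℕ → X) : Prop :=
  InjOn h (Ioc s t) ∧ MapsTo h (Ioc s t) (g '' Icc 1 t \ f '' Icc 1 s) ∧
    ∑ j ∈ Finset.Ioc s t, dist (c j) (h j) ≤ matchingCost s c f + matchingCost t c g

lemma isBlockAssignment_zero (hg : InjOn g (Icc 1 t)) : IsBlockAssignment c f g 0 t g := by
  refine ⟨?_, fun j hj => ⟨mem_image_of_mem g ?_, by simp⟩, ?_⟩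
  · rwa [← Set.Icc_add_one_left_eq_Ioc]
  · rwa [← Set.Icc_add_one_left_eq_Ioc] at hj
  · rw [← Finset.Icc_add_one_left_eq_Ioc (0 : ℕ), zero_add, matchingCost_zero, zero_add]
    exact le_rfl

lemma IsBlockAssignment.succ_of_forall_ne (hh : IsBlockAssignment c f g s t h)
    (hne : ∀ j ∈ Ioc (s + 1) t, h j ≠ f (s + 1)) : IsBlockAssignment c f g (s + 1) t h := by
  have hsub : Ioc (s + 1) t ⊆ Ioc s t := Ioc_subset_Ioc_left s.le_succ
  refine ⟨hh.1.mono hsub, fun j hj => mem_diff_image_Icc_succ (hh.2.1 (hsub hj)) (hne j hj), ?_⟩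
  calc ∑ j ∈ Finset.Ioc (s + 1) t, dist (c j) (h j)
      ≤ ∑ j ∈ Finset.Ioc s t, dist (c j) (h j) :=
        Finset.sum_le_sum_of_subset_of_nonneg (Finset.Ioc_subset_Ioc_left s.le_succ)
          fun _ _ _ => dist_nonneg
    _ ≤ matchingCost s c f + matchingCost t c g := hh.2.2
    _ ≤ matchingCost (s + 1) c f + matchingCost t c g := by
        gcongr; exact matchingCost_mono s.le_succ

/-- Client `j'`, which used the server `f (s + 1)` that becomes forbidden, takes over the server
of client `s + 1`; by the triangle inequality this costs at most `dist (c (s + 1)) (f (s + 1))`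
more. -/
lemma IsBlockAssignment.succ_comp_swap (hh : IsBlockAssignment c f g s t h) {j' : ℕ}
    (hj' : j' ∈ Ioc (s + 1) t) (hj'f : h j' = f (s + 1)) :
    IsBlockAssignment c f g (s + 1) t (h ∘ Equiv.swap j' (s + 1)) := by
  obtain ⟨hinj, hmaps, hcost⟩ := hh
  have hst : s < t := by simp only [mem_Ioc] at hj'; omega
  have hs₁ : s + 1 ∈ Ioc s t := ⟨s.lt_succ_self, hst⟩
  have hj's : j' ∈ Ioc s t := Ioc_subset_Ioc_left s.le_succ hj'
  have hσ : ∀ j ∈ Ioc (s + 1) t, Equiv.swap j' (s + 1) j ∈ Ioc s t ∧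
      Equiv.swap j' (s + 1) j ≠ j' := fun j hj => by
    simp only [mem_Ioc] at hj hj'
    rcases eq_or_ne j j' with rfl | hjj'
    · simp only [Equiv.swap_apply_left]; exact ⟨hs₁, by omega⟩
    · rw [Equiv.swap_apply_of_ne_of_ne hjj' (by omega)]; exact ⟨⟨by omega, hj.2⟩, hjj'⟩
  refine ⟨hinj.comp (Equiv.injective _).injOn fun j hj => (hσ j hj).1, fun j hj => ?_, ?_⟩
  · refine mem_diff_image_Icc_succ (hmaps (hσ j hj).1) fun heq => (hσ j hj).2 ?_
    exact hinj (hσ j hj).1 hj's (heq.trans hj'f.symm)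
  · have hj'F : j' ∈ Finset.Ioc (s + 1) t := by simpa using hj'
    have hswap : ∑ j ∈ Finset.Ioc (s + 1) t, dist (c j) (h (Equiv.swap j' (s + 1) j)) =
        dist (c j') (h (s + 1)) + ∑ j ∈ (Finset.Ioc (s + 1) t).erase j', dist (c j) (h j) := by
      rw [← Finset.add_sum_erase _ _ hj'F, Equiv.swap_apply_left]
      congr 1
      refine Finset.sum_congr rfl fun j hj => ?_
      rw [Equiv.swap_apply_of_ne_of_ne (Finset.ne_of_mem_erase hj)]
      simp only [Finset.mem_erase, Finset.mem_Ioc] at hj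
      omega
    have htri := dist_triangle4 (c j') (h j') (c (s + 1)) (h (s + 1))
    have hdetour : dist (h j') (c (s + 1)) = dist (c (s + 1)) (f (s + 1)) := by
      rw [hj'f, dist_comm]
    rw [sum_Ioc_eq_add_sum_Ioc_succ _ hst, ← Finset.add_sum_erase _ _ hj'F] at hcost
    rw [Function.comp_def, hswap, matchingCost_succ]
    linarith

lemma exists_isBlockAssignment (hg : InjOn g (Icc 1 t)) :
    ∀ {s}, s ≤ t → ∃ h, IsBlockAssignment c f g s t h
  | 0, _ => ⟨g, isBlockAssignment_zero hg⟩
  | s + 1, hst => by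
    obtain ⟨h, hh⟩ := exists_isBlockAssignment hg (s := s) (by omega)
    by_cases hconf : ∃ j' ∈ Ioc (s + 1) t, h j' = f (s + 1)
    · obtain ⟨j', hj', hj'f⟩ := hconf
      exact ⟨_, hh.succ_comp_swap hj' hj'f⟩
    · push Not at hconf
      exact ⟨h, hh.succ_of_forall_ne hconf⟩

end BlockAssignment

section StepDown

variable {d s t r v j : ℕ}

/-- `t` minus the place value of its lowest nonzero base-`d` digit. -/
def stepDown (d t : ℕ) : ℕ := t - d ^ padicValNat d t

lemma stepDown_le (d t : ℕ) : stepDown d t ≤ t := Nat.sub_le _ _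

lemma stepDown_lt (ht : 0 < t) : stepDown d t < t :=
  Nat.sub_lt ht (Nat.pos_of_dvd_of_pos pow_padicValNat_dvd ht)

lemma stepDown_lt_of_le_stepDown (hj : 1 ≤ j) (h : j ≤ stepDown d t) : stepDown d t < t :=
  stepDown_lt (by have := stepDown_le d t; omega)

lemma pow_padicValNat_dvd_stepDown : d ^ padicValNat d t ∣ stepDown d t :=
  Nat.dvd_sub pow_padicValNat_dvd dvd_rfl

lemma padicValNat_add_of_lt_pow (hd : 1 < d) (hs : d ^ v ∣ s) (hr : 0 < r) (hrv : r < d ^ v) :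
    padicValNat d (s + r) = padicValNat d r := by
  have hwv : padicValNat d r < v :=
    (Nat.pow_lt_pow_iff_right hd).mp ((Nat.le_of_dvd hr pow_padicValNat_dvd).trans_lt hrv)
  have hdvd : ∀ {k}, k ≤ v → (d ^ k ∣ s + r ↔ k ≤ padicValNat d r) := fun hk => by
    rw [Nat.dvd_add_right ((pow_dvd_pow d hk).trans hs),
      Nat.pow_dvd_iff_le_padicValNat (by omega) (by omega)]
  have hsr : ∀ {k}, d ^ k ∣ s + r ↔ k ≤ padicValNat d (s + r) :=
    Nat.pow_dvd_iff_le_padicValNat (by omega) (by omega)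
  refine le_antisymm (not_lt.mp fun hlt => ?_) (hsr.mp ((hdvd hwv.le).mpr le_rfl))
  exact absurd ((hdvd hwv).mp (hsr.mpr hlt)) (by omega)

lemma stepDown_add_of_lt_pow (hd : 1 < d) (hs : d ^ v ∣ s) (hr : 0 < r) (hrv : r < d ^ v) :
    stepDown d (s + r) = s + stepDown d r := by
  have := Nat.le_of_dvd hr (pow_padicValNat_dvd (p := d) (n := r))
  rw [stepDown, stepDown, padicValNat_add_of_lt_pow hd hs hr hrv]
  omega

lemma digits_sum_add_mul (hd : 1 < d) {x : ℕ} (hx : x < d) (y : ℕ) :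
    (d.digits (x + d * y)).sum = x + (d.digits y).sum := by
  by_cases h : x = 0 ∧ y = 0
  · simp [h.1, h.2]
  · rw [Nat.digits_add d hd x y hx (by tauto), List.sum_cons]

lemma digits_sum_pow_mul (hd : 1 < d) (v n : ℕ) :
    (d.digits (d ^ v * n)).sum = (d.digits n).sum := by
  induction v with
  | zero => simp
  | succ v ih =>
    rw [pow_succ', mul_assoc, ← zero_add (d * _), digits_sum_add_mul hd (by omega), ih, zero_add]

lemma digits_sum_stepDown (hd : 1 < d) (ht : 0 < t) :
    (d.digits t).sum = (d.digits (stepDown d t)).sum + 1 := by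
  obtain ⟨m, hm, hmd⟩ : ∃ m, d ^ padicValNat d t * m = t ∧ ¬ d ∣ m :=
    ⟨_, Nat.pow_padicValNat_mul_divMaxPow d t, Nat.not_dvd_divMaxPow hd ht.ne'⟩
  obtain ⟨a, q, ha, had, rfl⟩ : ∃ a q, 0 < a ∧ a < d ∧ m = a + d * q :=
    ⟨m % d, m / d, Nat.pos_of_ne_zero fun h0 => hmd (Nat.dvd_of_mod_eq_zero h0),
      Nat.mod_lt m (by omega), (Nat.mod_add_div m d).symm⟩
  have hstep : stepDown d t = d ^ padicValNat d t * (a - 1 + d * q) := by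
    rw [stepDown, show a - 1 + d * q = a + d * q - 1 by omega, Nat.mul_sub_one, hm]
  conv_lhs => rw [← hm]
  rw [hstep, digits_sum_pow_mul hd, digits_sum_pow_mul hd, digits_sum_add_mul hd had,
    digits_sum_add_mul hd (by omega)]
  omega

lemma digits_sum_le (hd : 1 < d) (t : ℕ) : (d.digits t).sum ≤ (d - 1) * Nat.clog d (t + 1) := by
  calc (d.digits t).sum ≤ (d.digits t).length • (d - 1) :=
        List.sum_le_card_nsmul _ _ fun x hx => Nat.le_sub_one_of_lt (Nat.digits_lt_base hd hx)
    _ ≤ Nat.clog d (t + 1) * (d - 1) := by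
        rw [smul_eq_mul]
        gcongr
        exact (Nat.digits_length_le_iff hd t).mpr (Nat.le_pow_clog hd (t + 1))
    _ = (d - 1) * Nat.clog d (t + 1) := mul_comm _ _

lemma ncard_setOf_stepDown_lt_le_log (hd : 1 < d) (j k : ℕ) :
    {t | j < t ∧ t ≤ k ∧ stepDown d t < j}.ncard ≤ Nat.log d k := by
  -- two such `t₁ < t₂` with the same valuation `v` have `d ^ v ∣ t₂ - t₁`, so `stepDown d t₂ ≥ t₁`
  have hpow : ∀ {t}, j < t → stepDown d t < j → d ^ padicValNat d t ≤ t := fun h _ =>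
    Nat.le_of_dvd (by omega) pow_padicValNat_dvd
  have hinj : ∀ {t₁ t₂}, t₁ < t₂ → j < t₁ → stepDown d t₂ < j →
      padicValNat d t₁ ≠ padicValNat d t₂ := fun {t₁ t₂} h12 hj1 hs2 heq => by
    have h₁ : d ^ padicValNat d t₂ ∣ t₁ := heq ▸ pow_padicValNat_dvd
    have := Nat.le_of_dvd (by omega) (Nat.dvd_sub pow_padicValNat_dvd h₁)
    rw [stepDown] at hs2
    omega
  calc _ ≤ (Icc 1 (Nat.log d k)).ncard := by
        refine ncard_le_ncard_of_injOn (padicValNat d) (fun t ⟨hjt, htk, hst⟩ => ⟨?_, ?_⟩)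
          (fun t₁ h₁ t₂ h₂ heq => ?_) (finite_Icc _ _)
        · refine Nat.pos_of_ne_zero fun h0 => ?_
          rw [stepDown, h0, pow_zero] at hst
          omega
        · exact Nat.le_log_of_pow_le hd ((hpow hjt hst).trans htk)
        · rcases lt_trichotomy t₁ t₂ with h | h | h
          · exact absurd heq (hinj h h₁.1 h₂.2.2)
          · exact h
          · exact absurd heq.symm (hinj h h₂.1 h₁.2.2)
    _ = Nat.log d k := by simp

end StepDown

section Anchor

variable {d s t r v a b j : ℕ}

def anchor (d t j : ℕ) : ℕ :=
  if 1 ≤ j ∧ j ≤ stepDown d t then anchor d (stepDown d t) j else t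
termination_by t
decreasing_by exact stepDown_lt_of_le_stepDown ‹_ ∧ _›.1 ‹_ ∧ _›.2

lemma anchor_of_le_stepDown (hj : 1 ≤ j) (h : j ≤ stepDown d t) :
    anchor d t j = anchor d (stepDown d t) j := by
  rw [anchor, if_pos ⟨hj, h⟩]

lemma anchor_eq_self (h : ¬(1 ≤ j ∧ j ≤ stepDown d t)) : anchor d t j = t := by
  rw [anchor, if_neg h]

lemma anchor_le (d t j : ℕ) : anchor d t j ≤ t := by
  induction t using Nat.strong_induction_on with
  | _ t ih =>
    by_cases h : 1 ≤ j ∧ j ≤ stepDown d t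
    · rw [anchor_of_le_stepDown h.1 h.2]
      exact (ih _ (stepDown_lt_of_le_stepDown h.1 h.2)).trans (stepDown_le d t)
    · rw [anchor_eq_self h]

lemma mem_Ioc_anchor (hj : 1 ≤ j) (hjt : j ≤ t) :
    j ∈ Ioc (stepDown d (anchor d t j)) (anchor d t j) := by
  induction t using Nat.strong_induction_on with
  | _ t ih =>
    by_cases h : j ≤ stepDown d t
    · rw [anchor_of_le_stepDown hj h]
      exact ih _ (stepDown_lt_of_le_stepDown hj h) h
    · rw [anchor_eq_self (by omega)]
      exact ⟨not_le.mp h, hjt⟩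

lemma anchor_le_stepDown_anchor (hab : anchor d t a < anchor d t b) :
    anchor d t a ≤ stepDown d (anchor d t b) := by
  induction t using Nat.strong_induction_on with
  | _ t ih =>
    by_cases ha : 1 ≤ a ∧ a ≤ stepDown d t <;> by_cases hb : 1 ≤ b ∧ b ≤ stepDown d t
    · rw [anchor_of_le_stepDown ha.1 ha.2, anchor_of_le_stepDown hb.1 hb.2] at hab ⊢
      exact ih _ (stepDown_lt_of_le_stepDown ha.1 ha.2) hab
    · rw [anchor_of_le_stepDown ha.1 ha.2, anchor_eq_self hb]
      exact anchor_le d _ a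
    · rw [anchor_eq_self ha] at hab
      exact absurd ((anchor_le d t b).trans_lt hab) (lt_irrefl _)
    · rw [anchor_eq_self ha, anchor_eq_self hb] at hab
      exact absurd hab (lt_irrefl _)

lemma anchor_add_of_lt_pow (hd : 1 < d) (hs : d ^ v ∣ s) (hrv : r < d ^ v) (hj : 1 ≤ j)
    (hjs : j ≤ s) : anchor d (s + r) j = anchor d s j := by
  induction r using Nat.strong_induction_on with
  | _ r ih =>
    rcases Nat.eq_zero_or_pos r with rfl | hr
    · rfl
    · have hstep := stepDown_add_of_lt_pow hd hs hr hrv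
      rw [anchor_of_le_stepDown hj (by omega), hstep]
      exact ih _ (stepDown_lt hr) ((stepDown_le d r).trans_lt hrv)

lemma anchor_sub_one (hd : 1 < d) (ht : 0 < t) (hj : 1 ≤ j) (hjs : j ≤ stepDown d t) :
    anchor d (t - 1) j = anchor d t j := by
  have hpos : 0 < d ^ padicValNat d t := Nat.pos_of_dvd_of_pos pow_padicValNat_dvd ht
  have hle : d ^ padicValNat d t ≤ t := Nat.le_of_dvd ht pow_padicValNat_dvd
  have ht1 : t - 1 = stepDown d t + (d ^ padicValNat d t - 1) := by rw [stepDown]; omega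
  rw [ht1, anchor_add_of_lt_pow hd pow_padicValNat_dvd_stepDown (by omega) hj hjs,
    anchor_of_le_stepDown hj hjs]

end Anchor

section Algorithm

variable {X : Type*} [MetricSpace X] [Nonempty X] (S : Finset X) (d : ℕ)

noncomputable def blockAssign (c : ℕ → X) (q : ℕ) : ℕ → X :=
  Classical.epsilon
    (IsBlockAssignment c (optChain S c (stepDown d q)) (optChain S c q) (stepDown d q) q)

noncomputable def assign (c : ℕ → X) (t j : ℕ) : X := blockAssign S d c (anchor d t j) j

variable {S d} {c c' : ℕ → X} {q t j : ℕ}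

lemma isBlockAssignment_blockAssign (hq : q ≤ S.card) :
    IsBlockAssignment c (optChain S c (stepDown d q)) (optChain S c q) (stepDown d q) q
      (blockAssign S d c q) :=
  Classical.epsilon_spec (exists_isBlockAssignment (isOptimal_optChain hq).1.1 (stepDown_le d q))

lemma blockAssign_congr (h : EqOn c c' (Icc 1 q)) :
    blockAssign S d c q = blockAssign S d c' q := by
  have hs : EqOn c c' (Icc 1 (stepDown d q)) := h.mono (Icc_subset_Icc_right (stepDown_le d q))
  unfold blockAssign
  congr 1
  ext g
  simp only [IsBlockAssignment, optChain_congr h, optChain_congr hs, matchingCost_congr h,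
    matchingCost_congr hs]
  rw [Finset.sum_congr rfl fun j hj => by
    rw [h (by simp only [Finset.mem_Ioc] at hj; exact ⟨by omega, hj.2⟩)]]

lemma assign_congr (h : EqOn c c' (Icc 1 t)) : assign S d c t = assign S d c' t := by
  ext j
  exact congrFun (blockAssign_congr (h.mono (Icc_subset_Icc_right (anchor_le d t j)))) j

lemma assign_mem (ht : t ≤ S.card) (hj : j ∈ Icc 1 t) :
    assign S d c t j ∈ optChain S c (anchor d t j) '' Icc 1 (anchor d t j) \
      optChain S c (stepDown d (anchor d t j)) '' Icc 1 (stepDown d (anchor d t j)) :=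
  (isBlockAssignment_blockAssign ((anchor_le d t j).trans ht)).2.1 (mem_Ioc_anchor hj.1 hj.2)

lemma assign_ne_of_anchor_lt {a b : ℕ} (ht : t ≤ S.card) (ha : a ∈ Icc 1 t) (hb : b ∈ Icc 1 t)
    (hab : anchor d t a < anchor d t b) : assign S d c t a ≠ assign S d c t b := fun heq =>
  (assign_mem ht hb).2 <| heq ▸ image_optChain_subset (anchor_le_stepDown_anchor hab)
    ((stepDown_le d _).trans ((anchor_le d t b).trans ht)) (assign_mem ht ha).1

lemma isMatching_assign (ht : t ≤ S.card) : IsMatching S t (assign S d c t) := by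
  refine ⟨fun a ha b hb hab => ?_, fun j hj => ?_⟩
  · rcases lt_trichotomy (anchor d t a) (anchor d t b) with hlt | heq | hlt
    · exact absurd hab (assign_ne_of_anchor_lt ht ha hb hlt)
    · have ha' := mem_Ioc_anchor (d := d) ha.1 ha.2
      rw [assign, assign, heq] at hab
      rw [heq] at ha'
      exact (isBlockAssignment_blockAssign ((anchor_le d t b).trans ht)).1 ha'
        (mem_Ioc_anchor hb.1 hb.2) hab
    · exact absurd hab.symm (assign_ne_of_anchor_lt ht hb ha hlt)
  · obtain ⟨i, hi, hij⟩ := (assign_mem ht hj).1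
    exact hij ▸ (isOptimal_optChain ((anchor_le d t j).trans ht)).1.2 i hi

lemma matchingCost_assign_le_stepDown (ht : t ≤ S.card) :
    matchingCost t c (assign S d c t) ≤
      matchingCost (stepDown d t) c (assign S d c (stepDown d t)) +
        OPT S (stepDown d t) c + OPT S t c := by
  set s := stepDown d t
  have hs : s ≤ S.card := (stepDown_le d t).trans ht
  have hlow : matchingCost s c (assign S d c t) = matchingCost s c (assign S d c s) :=
    Finset.sum_congr rfl fun j hj => by
      simp only [Finset.mem_Icc] at hj
      rw [assign, assign, anchor_of_le_stepDown hj.1 hj.2]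
  have hhigh : ∑ j ∈ Finset.Ioc s t, dist (c j) (assign S d c t j) =
      ∑ j ∈ Finset.Ioc s t, dist (c j) (blockAssign S d c t j) :=
    Finset.sum_congr rfl fun j hj => by
      simp only [Finset.mem_Ioc] at hj
      rw [assign, anchor_eq_self (by omega)]
  have hblock := (isBlockAssignment_blockAssign (c := c) (d := d) ht).2.2
  rw [(isOptimal_optChain hs).2, (isOptimal_optChain ht).2] at hblock
  rw [matchingCost_eq_add_sum_Ioc (stepDown_le d t), hlow, hhigh]
  linarith

lemma matchingCost_assign_add_OPT_le (hd : 1 < d) (ht : t ≤ S.card) :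
    matchingCost t c (assign S d c t) + OPT S t c ≤ 2 * (d.digits t).sum * OPT S t c := by
  induction t using Nat.strong_induction_on with
  | _ t ih =>
    rcases Nat.eq_zero_or_pos t with rfl | htpos
    · simp [matchingCost_zero, OPT_zero]
    · have hs := (stepDown_le d t).trans ht
      have hrec := ih _ (stepDown_lt htpos) hs
      have hmono := mul_le_mul_of_nonneg_left (OPT_mono (c := c) (stepDown_le d t) ht)
        (by positivity : (0 : ℝ) ≤ 2 * (d.digits (stepDown d t)).sum)
      rw [digits_sum_stepDown hd htpos, Nat.cast_add, Nat.cast_one]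
      linarith [matchingCost_assign_le_stepDown (c := c) (d := d) ht]

lemma matchingCost_assign_le (hd : 1 < d) (ht : t ≤ S.card) :
    matchingCost t c (assign S d c t) ≤
      (2 * ((d : ℝ) - 1) * (Nat.clog d (t + 1) : ℝ) - 1) * OPT S t c := by
  have hdigits : ((d.digits t).sum : ℝ) ≤ ((d : ℝ) - 1) * Nat.clog d (t + 1) := by
    rw [← Nat.cast_pred (by omega)]
    exact_mod_cast digits_sum_le hd t
  have hOPT : 0 ≤ OPT S t c := OPT_nonneg
  nlinarith [matchingCost_assign_add_OPT_le (c := c) hd ht]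

lemma assign_sub_one (hd : 1 < d) (ht : 0 < t) (hj : 1 ≤ j) (hjs : j ≤ stepDown d t) :
    assign S d c (t - 1) j = assign S d c t j := by
  rw [assign, assign, anchor_sub_one hd ht hj hjs]

lemma ncard_reassign_le (hd : 1 < d) (hj : 1 ≤ j) (k : ℕ) :
    {t | j < t ∧ t ≤ k ∧ assign S d c t j ≠ assign S d c (t - 1) j}.ncard ≤ Nat.log d k := by
  have hsub : {t | j < t ∧ t ≤ k ∧ assign S d c t j ≠ assign S d c (t - 1) j} ⊆
      {t | j < t ∧ t ≤ k ∧ stepDown d t < j} := by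
    rintro t ⟨hjt, htk, hne⟩
    exact ⟨hjt, htk, not_le.mp fun hle => hne (assign_sub_one hd (by omega) hj hle).symm⟩
  exact (ncard_le_ncard hsub ((finite_Iic k).subset fun t ht => ht.2.1)).trans
    (ncard_setOf_stepDown_lt_le_log hd j k)

noncomputable def extendPrefix {t : ℕ} (cp : Fin t → X) : ℕ → X :=
  fun j => if h : j - 1 < t then cp ⟨j - 1, h⟩ else Classical.arbitrary X

lemma assign_extendPrefix_prefixOf (c : ℕ → X) (t : ℕ) :
    assign S d (extendPrefix (prefixOf c t)) t = assign S d c t := by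
  refine assign_congr fun j hj => ?_
  simp only [mem_Icc] at hj
  simp only [extendPrefix, prefixOf, dif_pos (show j - 1 < t by omega)]
  congr
  omega

end Algorithm

/-- For every integer `d ≥ 2`, every metric space `(X,δ)` and every finite server set `S`
with `|S| = k ≥ 1`, there is a deterministic online matching algorithm `A` for `S` such that
for every client sequence `c 1, …, c k`: (i) at every time `1 ≤ t ≤ k` the matching
maintained has cost at most `(2(d−1)⌈log_d(t+1)⌉ − 1) · OPT_t`, and (ii) every client index
`j` is reassigned at most `⌊log_d k⌋` times over the whole sequence. -/
theorem stmt3 (d : ℕ) (hd : 2 ≤ d) {X : Type*} [MetricSpace X]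
    (S : Finset X) (hk : 1 ≤ S.card) :
    ∃ A : (t : ℕ) → (Fin t → X) → (ℕ → X),
      (∀ t, t ≤ S.card → ∀ cp : Fin t → X, IsMatching S t (A t cp)) ∧
      ∀ c : ℕ → X,
        (∀ t, 1 ≤ t → t ≤ S.card →
          matchingCost t c (A t (prefixOf c t)) ≤
            (2 * ((d : ℝ) - 1) * (Nat.clog d (t + 1) : ℝ) - 1) * OPT S t c) ∧
        (∀ j, 1 ≤ j → j ≤ S.card →
          {t : ℕ | j < t ∧ t ≤ S.card ∧
              A t (prefixOf c t) j ≠ A (t - 1) (prefixOf c (t - 1)) j}.ncard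
            ≤ Nat.log d S.card) := by
  obtain ⟨x₀, -⟩ := Finset.card_pos.mp hk
  have : Nonempty X := ⟨x₀⟩
  refine ⟨fun t cp => assign S d (extendPrefix cp) t, fun t ht _ => isMatching_assign ht,
    fun c => ⟨fun t _ ht => ?_, fun j hj _ => ?_⟩⟩
  · simp only [assign_extendPrefix_prefixOf]
    exact matchingCost_assign_le hd ht
  · simp only [assign_extendPrefix_prefixOf]
    exact ncard_reassign_le hd hj _
end

section
/- Let C, S ⊂ ℝ be finite sets with |C| = |S| such that all points of C ∪ S are pairwise distinct (in particular C ∩ S = ∅), and let M : C → S be a bijection. Then M has minimum cost Σ_{c∈C} |c − M(c)| among all bijections from C to S if and only if for every c₁, c₂ ∈ C with c₁ < M(c₁) (a forward arc) and M(c₂) < c₂ (a backward arc), the closed intervals [c₁, M(c₁)] and [M(c₂), c₂] are disjoint. -/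
/-!
Every arc `(c, N c)` of a matching `N` of `C` onto `S` changes the count
`#{c ∈ C | c < t} - #{s ∈ S | s < t}` by `±1` exactly at the points `t ∈ Ι c (N c)` it passes
over. Hence at each `t` the number of arcs passing over `t` is at least the absolute value of this
count, with equality when no forward and backward arc both pass over `t`. Integrating in `t`
turns the number of arcs over `t` into the cost of `N`, so a matching whose forward and backward
arcs are disjoint attains the lower bound `∫ |#{c ∈ C | c < t} - #{s ∈ S | s < t}| dt`, which
does not depend on the matching. Conversely, if a forward arc `[c₁, M c₁]` meets a backward arc
`[M c₂, c₂]`, exchanging the servers of `c₁` and `c₂` strictly decreases the cost.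
-/

open MeasureTheory Set
open scoped Interval Finset

theorem Finset.sum_comp_swap_add {α β : Type*} [DecidableEq α] [AddCommMonoid β]
    {s : Finset α} {i j : α} (hi : i ∈ s) (hj : j ∈ s) (g : α → α → β) :
    ∑ c ∈ s, g c (Equiv.swap i j c) + (g i i + g j j) = ∑ c ∈ s, g c c + (g i j + g j i) := by
  rcases eq_or_ne i j with rfl | hij
  · simp
  have hj' : j ∈ s.erase i := Finset.mem_erase.2 ⟨hij.symm, hj⟩
  have hrest : ∑ c ∈ (s.erase i).erase j, g c (Equiv.swap i j c)
      = ∑ c ∈ (s.erase i).erase j, g c c := by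
    refine Finset.sum_congr rfl fun c hc => ?_
    obtain ⟨hcj, hci, -⟩ : c ≠ j ∧ c ≠ i ∧ c ∈ s := by simpa using hc
    rw [Equiv.swap_apply_of_ne_of_ne hci hcj]
  rw [← Finset.add_sum_erase s _ hi, ← Finset.add_sum_erase _ _ hj', hrest,
    ← Finset.add_sum_erase s _ hi, ← Finset.add_sum_erase _ _ hj',
    Equiv.swap_apply_left, Equiv.swap_apply_right]
  abel

theorem Finset.abs_sum_of_nonneg_or_nonpos {ι G : Type*} [AddCommGroup G] [LinearOrder G]
    [IsOrderedAddMonoid G] {s : Finset ι} {f : ι → G}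
    (hf : (∀ i ∈ s, 0 ≤ f i) ∨ ∀ i ∈ s, f i ≤ 0) : |∑ i ∈ s, f i| = ∑ i ∈ s, |f i| := by
  rcases hf with hf | hf
  · rw [Finset.abs_sum_of_nonneg hf]
    exact Finset.sum_congr rfl fun i hi => (abs_of_nonneg (hf i hi)).symm
  · rw [abs_of_nonpos (Finset.sum_nonpos hf), ← Finset.sum_neg_distrib]
    exact Finset.sum_congr rfl fun i hi => (abs_of_nonpos (hf i hi)).symm

theorem abs_ite_lt_sub_ite_lt (a b t : ℝ) :
    |((if a < t then 1 else 0) - (if b < t then 1 else 0) : ℝ)| = (Ι a b).indicator 1 t := by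
  simp only [indicator, uIoc, mem_Ioc, min_lt_iff, le_max_iff, Pi.one_apply]
  split_ifs <;> norm_num <;> grind

theorem integral_indicator_uIoc (a b : ℝ) : ∫ t, (Ι a b).indicator (1 : ℝ → ℝ) t = |a - b| := by
  rw [integral_indicator_one measurableSet_uIoc, measureReal_def, Real.volume_uIoc,
    ENNReal.toReal_ofReal (abs_nonneg _), abs_sub_comm]

theorem integrable_indicator_uIoc (a b : ℝ) : Integrable ((Ι a b).indicator (1 : ℝ → ℝ)) :=
  (integrable_indicator_iff measurableSet_uIoc).2 <|
    integrableOn_const (by simp [Real.volume_uIoc])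

theorem integral_sum_indicator_uIoc (C : Finset ℝ) (N : ℝ → ℝ) :
    ∫ t, ∑ c ∈ C, (Ι c (N c)).indicator (1 : ℝ → ℝ) t = ∑ c ∈ C, |c - N c| := by
  rw [integral_finsetSum _ fun c _ => integrable_indicator_uIoc c (N c)]
  exact Finset.sum_congr rfl fun c _ => integral_indicator_uIoc c (N c)

theorem abs_add_abs_lt_of_opposite_arcs_meet {a b a' b' t : ℝ} (hab : a < b) (hba : b' < a')
    (ha : a ≠ a') (hb : b ≠ b') (ht : t ∈ Set.Icc a b) (ht' : t ∈ Set.Icc b' a') :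
    |a - b'| + |a' - b| < |a - b| + |a' - b'| := by
  obtain ⟨hat, htb⟩ := ht
  obtain ⟨hbt, hta⟩ := ht'
  rw [abs_of_neg (sub_neg.2 hab), abs_of_pos (sub_pos.2 hba)]
  rcases lt_or_gt_of_ne ha with ha | ha <;> rcases lt_or_gt_of_ne hb with hb | hb <;>
    rcases abs_cases (a - b') with ⟨h₁, -⟩ | ⟨h₁, -⟩ <;>
    rcases abs_cases (a' - b) with ⟨h₂, -⟩ | ⟨h₂, -⟩ <;> linarith

def OppositeArcsDisjoint (C : Finset ℝ) (M : ℝ → ℝ) : Prop :=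
  ∀ c₁ ∈ C, ∀ c₂ ∈ C, c₁ < M c₁ → M c₂ < c₂ →
    Disjoint (Set.Icc c₁ (M c₁)) (Set.Icc (M c₂) c₂)

section Matching

variable {C S : Finset ℝ} {M : ℝ → ℝ}

theorem exists_cheaper_of_not_oppositeArcsDisjoint (hM : BijOn M C S)
    (h : ¬ OppositeArcsDisjoint C M) :
    ∃ M' : ℝ → ℝ, BijOn M' C S ∧ ∑ c ∈ C, |c - M' c| < ∑ c ∈ C, |c - M c| := by
  simp only [OppositeArcsDisjoint, not_forall, Set.not_disjoint_iff] at h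
  obtain ⟨c₁, hc₁, c₂, hc₂, hfwd, hbwd, t, ht₁, ht₂⟩ := h
  have hne : c₁ ≠ c₂ := by rintro rfl; linarith
  have hMne : M c₁ ≠ M c₂ := hne ∘ hM.injOn hc₁ hc₂
  refine ⟨M ∘ Equiv.swap c₁ c₂, hM.comp (Equiv.bijOn_swap hc₁ hc₂), ?_⟩
  have hswap := Finset.sum_comp_swap_add hc₁ hc₂ fun c d => |c - M d|
  have hlt := abs_add_abs_lt_of_opposite_arcs_meet hfwd hbwd hne hMne ht₁ ht₂
  simp only [Function.comp_apply]
  linarith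

theorem natCast_card_filter_lt_sub_eq_sum (hM : BijOn M C S) (t : ℝ) :
    ((#{c ∈ C | c < t} : ℕ) - (#{s ∈ S | s < t} : ℕ) : ℝ) =
      ∑ c ∈ C, ((if c < t then 1 else 0) - (if M c < t then 1 else 0)) := by
  rw [Finset.sum_sub_distrib, Finset.natCast_card_filter, Finset.natCast_card_filter,
    ← Finset.sum_nbij M hM.mapsTo hM.injOn hM.surjOn fun _ _ => rfl]

theorem sum_indicator_uIoc_le (hM : BijOn M C S) (hM_disj : OppositeArcsDisjoint C M)
    {M' : ℝ → ℝ} (hM' : BijOn M' C S) (t : ℝ) :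
    ∑ c ∈ C, (Ι c (M c)).indicator (1 : ℝ → ℝ) t ≤ ∑ c ∈ C, (Ι c (M' c)).indicator 1 t := by
  set f : ℝ → ℝ := fun c => (if c < t then 1 else 0) - (if M c < t then 1 else 0)
  have hsign : (∀ c ∈ C, 0 ≤ f c) ∨ ∀ c ∈ C, f c ≤ 0 := by
    have hfwd : ∀ c, 0 < f c → c < t ∧ t ≤ M c := by
      intro c; simp only [f]; split_ifs <;> simp_all
    have hbwd : ∀ c, f c < 0 → M c < t ∧ t ≤ c := by
      intro c; simp only [f]; split_ifs <;> simp_all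
    by_contra! ⟨⟨c₂, hc₂, h₂⟩, ⟨c₁, hc₁, h₁⟩⟩
    obtain ⟨hc₁t, htM₁⟩ := hfwd c₁ h₁
    obtain ⟨hM₂t, htc₂⟩ := hbwd c₂ h₂
    exact Set.disjoint_left.1 (hM_disj c₁ hc₁ c₂ hc₂ (by linarith) (by linarith))
      (⟨hc₁t.le, htM₁⟩ : t ∈ Set.Icc c₁ (M c₁)) ⟨hM₂t.le, htc₂⟩
  calc ∑ c ∈ C, (Ι c (M c)).indicator 1 t = |∑ c ∈ C, f c| := by
        simp only [Finset.abs_sum_of_nonneg_or_nonpos hsign, f, abs_ite_lt_sub_ite_lt]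
    _ = |∑ c ∈ C, ((if c < t then 1 else 0) - (if M' c < t then 1 else 0))| := by
        rw [← natCast_card_filter_lt_sub_eq_sum hM, ← natCast_card_filter_lt_sub_eq_sum hM']
    _ ≤ ∑ c ∈ C, (Ι c (M' c)).indicator 1 t := by
        refine (Finset.abs_sum_le_sum_abs _ _).trans_eq ?_
        simp only [abs_ite_lt_sub_ite_lt]

theorem sum_abs_sub_le_of_oppositeArcsDisjoint (hM : BijOn M C S)
    (hM_disj : OppositeArcsDisjoint C M) {M' : ℝ → ℝ} (hM' : BijOn M' C S) :
    ∑ c ∈ C, |c - M c| ≤ ∑ c ∈ C, |c - M' c| := by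
  rw [← integral_sum_indicator_uIoc, ← integral_sum_indicator_uIoc]
  refine integral_mono_of_nonneg (ae_of_all _ fun t => ?_)
    (integrable_finsetSum _ fun c _ => integrable_indicator_uIoc c (M' c))
    (ae_of_all _ (sum_indicator_uIoc_le hM hM_disj hM'))
  exact Finset.sum_nonneg fun c _ => indicator_nonneg (fun _ _ => zero_le_one) t

end Matching

theorem stmt8_general (C S : Finset ℝ)
    (M : ℝ → ℝ) (hM : Set.BijOn M ↑C ↑S) :
    (∀ M' : ℝ → ℝ, Set.BijOn M' ↑C ↑S →
        ∑ c ∈ C, |c - M c| ≤ ∑ c ∈ C, |c - M' c|) ↔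
      (∀ c₁ ∈ C, ∀ c₂ ∈ C, c₁ < M c₁ → M c₂ < c₂ →
        Disjoint (Set.Icc c₁ (M c₁)) (Set.Icc (M c₂) c₂)) := by
  refine ⟨fun hopt => ?_, fun hM_disj M' hM' =>
    sum_abs_sub_le_of_oppositeArcsDisjoint hM hM_disj hM'⟩
  by_contra h
  obtain ⟨M', hM', hlt⟩ := exists_cheaper_of_not_oppositeArcsDisjoint hM h
  exact (hopt M' hM').not_gt hlt

/-- On the line, a bijective matching `M` between clients `C` and servers `S` (with all
points of `C ∪ S` pairwise distinct) has minimum cost `∑_{c ∈ C} |c − M c|` among all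
bijections from `C` to `S` if and only if for every forward arc `(c₁, M c₁)` (i.e.
`c₁ < M c₁`) and every backward arc `(c₂, M c₂)` (i.e. `M c₂ < c₂`), the closed intervals
`[c₁, M c₁]` and `[M c₂, c₂]` are disjoint. -/
theorem stmt8 (C S : Finset ℝ) (hcard : C.card = S.card) (hdisj : Disjoint C S)
    (M : ℝ → ℝ) (hM : Set.BijOn M ↑C ↑S) :
    (∀ M' : ℝ → ℝ, Set.BijOn M' ↑C ↑S →
        ∑ c ∈ C, |c - M c| ≤ ∑ c ∈ C, |c - M' c|) ↔
      (∀ c₁ ∈ C, ∀ c₂ ∈ C, c₁ < M c₁ → M c₂ < c₂ →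
        Disjoint (Set.Icc c₁ (M c₁)) (Set.Icc (M c₂) c₂)) :=
  stmt8_general C S M hM
end

section
/- Let S ⊂ ℝ be a finite server set and C ⊂ ℝ a finite client set with |C| < |S|, such that all points of C ∪ S are pairwise distinct. Let M₁ be a minimum-cost injective matching of C into S, with image S₁, and let c ∈ ℝ be a new client with all points of C ∪ S ∪ {c} pairwise distinct. Suppose M₂ is a minimum-cost injective matching of C ∪ {c} into S whose image equals S₁ ∪ {s} for some s ∈ S \ S₁. Then every server of S lying strictly between c and s (i.e. in the open interval (min(c,s), max(c,s))) belongs to S₁ ∪ {s}; equivalently, no unmatched server of S \ (S₁ ∪ {s}) lies strictly between c and s. -/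
/-!
In a minimum-cost matching, a free server `p` lies strictly inside no edge, since rerouting
that edge's client to `p` would be cheaper. Hence every client and its server lie on the same
side of `p`, and injectivity gives as many clients as matched servers to the left of `p`.
If `p` were free for both matchings and strictly between `c` and `s`, comparing these counts
for `M₁` and `M₂` would show that `c` and `s` lie on the same side of `p`.
-/

open Finset Function

lemma Set.InjOn.update_of_notMem_image {α β : Type*} [DecidableEq α] {D : Set α} {M : α → β}
    (hM : Set.InjOn M D) {p : β} (hp : p ∉ M '' D) (x : α) :
    Set.InjOn (update M x p) D := by
  intro a ha b hb hab
  by_cases hax : a = x <;> by_cases hbx : b = x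
  · rw [hax, hbx]
  · simp only [hax, update_self, update_of_ne hbx] at hab
    exact absurd ⟨b, hb, hab.symm⟩ hp
  · simp only [hbx, update_self, update_of_ne hax] at hab
    exact absurd ⟨a, ha, hab⟩ hp
  · simp only [update_of_ne hax, update_of_ne hbx] at hab
    exact hM ha hb hab

lemma abs_sub_lt_abs_sub_of_mem_uIoo {a b p : ℝ} (hp : p ∈ Set.uIoo a b) :
    |a - p| < |a - b| := by
  rcases le_total a b with hab | hab
  · rw [Set.uIoo_of_le hab] at hp
    rw [abs_of_nonpos (by linarith [hp.1]), abs_of_nonpos (by linarith)]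
    linarith [hp.2]
  · rw [Set.uIoo_of_ge hab] at hp
    rw [abs_of_nonneg (by linarith [hp.2]), abs_of_nonneg (by linarith)]
    linarith [hp.1]

lemma notMem_uIoo_iff_lt_iff_lt {α : Type*} [LinearOrder α] {a b p : α} (ha : a ≠ p) (hb : b ≠ p) :
    p ∉ Set.uIoo a b ↔ (a < p ↔ b < p) := by
  rcases le_total a b with hab | hab
  · rw [Set.uIoo_of_le hab]
    grind
  · rw [Set.uIoo_of_ge hab]
    grind

lemma card_filter_eq_card_filter_image {α β : Type*} [DecidableEq β] {D : Finset α} {M : α → β}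
    (hM : Set.InjOn M D) {P : α → Prop} [DecidablePred P] {Q : β → Prop} [DecidablePred Q]
    (h : ∀ x ∈ D, (P x ↔ Q (M x))) :
    #(D.filter P) = #((D.image M).filter Q) := by
  rw [filter_image, card_image_of_injOn (hM.mono (coe_subset.2 (filter_subset _ _))),
    filter_congr h]

lemma iff_of_card_filter_insert_eq {α : Type*} [DecidableEq α] {P : α → Prop} [DecidablePred P]
    {s t : Finset α} {a b : α} (ha : a ∉ s) (hb : b ∉ t) (h : #(s.filter P) = #(t.filter P))
    (h' : #((insert a s).filter P) = #((insert b t).filter P)) : P a ↔ P b := by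
  rw [filter_insert, filter_insert] at h'
  by_cases hPa : P a <;> by_cases hPb : P b <;>
    simp_all [card_insert_of_notMem]

def IsMinCostMatching (D S : Finset ℝ) (M : ℝ → ℝ) : Prop :=
  Set.InjOn M D ∧ Set.MapsTo M D S ∧
    ∀ M' : ℝ → ℝ, Set.InjOn M' D → Set.MapsTo M' D S → ∑ x ∈ D, |x - M x| ≤ ∑ x ∈ D, |x - M' x|

namespace IsMinCostMatching

variable {D S : Finset ℝ} {M : ℝ → ℝ} {p : ℝ}

lemma notMem_uIoo (hM : IsMinCostMatching D S M) (hpS : p ∈ S) (hp : p ∉ M '' D) {x : ℝ}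
    (hx : x ∈ D) : p ∉ Set.uIoo x (M x) := by
  classical
  intro hpx
  obtain ⟨hinj, hmap, hopt⟩ := hM
  have hmap' : Set.MapsTo (update M x p) D S := by
    intro y hy
    by_cases hyx : y = x
    · simpa [hyx] using hpS
    · simpa [hyx] using hmap hy
  have hcheaper : ∑ y ∈ D, |y - update M x p y| < ∑ y ∈ D, |y - M y| := by
    refine sum_lt_sum (fun y _ => ?_) ⟨x, hx, by simpa using abs_sub_lt_abs_sub_of_mem_uIoo hpx⟩
    by_cases hyx : y = x
    · simpa [hyx] using (abs_sub_lt_abs_sub_of_mem_uIoo hpx).le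
    · simp [hyx]
  exact (hopt _ (hinj.update_of_notMem_image hp x) hmap').not_gt hcheaper

lemma lt_iff_lt (hM : IsMinCostMatching D S M) (hpS : p ∈ S) (hp : p ∉ M '' D) (hpD : p ∉ D)
    {x : ℝ} (hx : x ∈ D) : x < p ↔ M x < p :=
  (notMem_uIoo_iff_lt_iff_lt (ne_of_mem_of_not_mem hx hpD) (fun h => hp ⟨x, hx, h⟩)).1
    (hM.notMem_uIoo hpS hp hx)

lemma card_filter_lt_eq (hM : IsMinCostMatching D S M) (hpS : p ∈ S) (hp : p ∉ M '' D)
    (hpD : p ∉ D) : #(D.filter (· < p)) = #((D.image M).filter (· < p)) :=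
  card_filter_eq_card_filter_image hM.1 fun _ hx => hM.lt_iff_lt hpS hp hpD hx

end IsMinCostMatching

theorem stmt9_general (S C : Finset ℝ) (hdisj : Disjoint C S)
    (M₁ : ℝ → ℝ) (h₁inj : Set.InjOn M₁ ↑C) (h₁map : Set.MapsTo M₁ ↑C ↑S)
    (h₁opt : ∀ M' : ℝ → ℝ, Set.InjOn M' ↑C → Set.MapsTo M' ↑C ↑S →
        ∑ x ∈ C, |x - M₁ x| ≤ ∑ x ∈ C, |x - M' x|)
    (c : ℝ) (hcC : c ∉ C)
    (s : ℝ) (hs1 : s ∉ M₁ '' ↑C)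
    (M₂ : ℝ → ℝ) (h₂inj : Set.InjOn M₂ ↑(insert c C)) (h₂map : Set.MapsTo M₂ ↑(insert c C) ↑S)
    (h₂opt : ∀ M' : ℝ → ℝ, Set.InjOn M' ↑(insert c C) → Set.MapsTo M' ↑(insert c C) ↑S →
        ∑ x ∈ insert c C, |x - M₂ x| ≤ ∑ x ∈ insert c C, |x - M' x|)
    (h₂img : M₂ '' ↑(insert c C) = insert s (M₁ '' ↑C)) :
    ∀ s' ∈ S, s' ∈ Set.Ioo (min c s) (max c s) → s' ∈ insert s (M₁ '' ↑C) := by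
  intro p hpS hp
  by_contra hfree
  have hpc : c ≠ p := fun h => Set.left_notMem_uIoo (h ▸ hp)
  have hps : s ≠ p := fun h => Set.right_notMem_uIoo (h ▸ hp)
  have hpC : p ∉ C := disjoint_right.1 hdisj hpS
  have hcount₁ := IsMinCostMatching.card_filter_lt_eq ⟨h₁inj, h₁map, h₁opt⟩ hpS
    (fun h => hfree (Set.mem_insert_of_mem s h)) hpC
  have hcount₂ := IsMinCostMatching.card_filter_lt_eq ⟨h₂inj, h₂map, h₂opt⟩ hpS (h₂img ▸ hfree)
    (by simp [hpc.symm, hpC])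
  have himg : (insert c C).image M₂ = insert s (C.image M₁) := by exact_mod_cast h₂img
  rw [himg] at hcount₂
  have hsides : c < p ↔ s < p :=
    iff_of_card_filter_insert_eq hcC (by exact_mod_cast hs1) hcount₁ hcount₂
  exact (notMem_uIoo_iff_lt_iff_lt hpc hps).2 hsides hp

/-- No free server strictly inside a new arc of Permutation on the line: let `M₁` be a
minimum-cost injective matching of the clients `C` into the servers `S` (`|C| < |S|`, all
points pairwise distinct) with image `S₁ = M₁ '' C`, let `c` be a new client (distinct from
all points of `C ∪ S`), and let `M₂` be a minimum-cost injective matching of `C ∪ {c}` into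
`S` whose image is `S₁ ∪ {s}` for some server `s ∈ S \ S₁`.  Then every server of `S` lying
strictly between `c` and `s` belongs to `S₁ ∪ {s}`. -/
theorem stmt9 (S C : Finset ℝ) (hcard : C.card < S.card) (hdisj : Disjoint C S)
    (M₁ : ℝ → ℝ) (h₁inj : Set.InjOn M₁ ↑C) (h₁map : Set.MapsTo M₁ ↑C ↑S)
    (h₁opt : ∀ M' : ℝ → ℝ, Set.InjOn M' ↑C → Set.MapsTo M' ↑C ↑S →
        ∑ x ∈ C, |x - M₁ x| ≤ ∑ x ∈ C, |x - M' x|)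
    (c : ℝ) (hcC : c ∉ C) (hcS : c ∉ S)
    (s : ℝ) (hs : s ∈ S) (hs1 : s ∉ M₁ '' ↑C)
    (M₂ : ℝ → ℝ) (h₂inj : Set.InjOn M₂ ↑(insert c C)) (h₂map : Set.MapsTo M₂ ↑(insert c C) ↑S)
    (h₂opt : ∀ M' : ℝ → ℝ, Set.InjOn M' ↑(insert c C) → Set.MapsTo M' ↑(insert c C) ↑S →
        ∑ x ∈ insert c C, |x - M₂ x| ≤ ∑ x ∈ insert c C, |x - M' x|)
    (h₂img : M₂ '' ↑(insert c C) = insert s (M₁ '' ↑C)) :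
    ∀ s' ∈ S, s' ∈ Set.Ioo (min c s) (max c s) → s' ∈ insert s (M₁ '' ↑C) :=
  stmt9_general S C hdisj M₁ h₁inj h₁map h₁opt c hcC s hs1 M₂ h₂inj h₂map h₂opt h₂img
end

section
/- Let C, S ⊂ ℝ be finite sets with |C| = |S| = m ≥ 1, and let M : C → S be any bijection. For x ∈ ℝ, let n^f_M(x) = card{c ∈ C : c ≤ x < M(c)} (the number of forward arcs of M crossing x) and n^b_M(x) = card{c ∈ C : M(c) ≤ x < c} (the number of backward arcs of M crossing x). Then Σ_{c∈C} |c − M(c)| = OPT + 2·∫_ℝ min(n^f_M(x), n^b_M(x)) dx, where OPT is the minimum of Σ_{c∈C} |c − M'(c)| over all bijections M' : C → S. -/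
/-!
Let `f x` and `b x` count the forward and backward arcs of a matching crossing `x`. The cost of
the matching is `∫ (f + b)`, while `f x - b x = #{c ≤ x} - #{s ≤ x}` does not depend on the
matching. Hence every matching costs at least `∫ |f - b|`, with equality for the monotone
matching, whose forward and backward arcs never cross the same point. So `OPT = ∫ |f - b|`, and
since `f + b = |f - b| + 2 min f b`, the cost of any matching exceeds `OPT` by `2 ∫ min f b`.
-/

open MeasureTheory Finset

noncomputable section

variable {ι : Type*}

/-- Forward arcs of `M` crossing `x` are counted by `crossCount C id M x`, backward ones by
`crossCount C M id x`. -/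
def crossCount (C : Finset ι) (a b : ι → ℝ) (x : ℝ) : ℝ :=
  #{i ∈ C | a i ≤ x ∧ x < b i}

lemma crossCount_eq_sum_indicator (C : Finset ι) (a b : ι → ℝ) (x : ℝ) :
    crossCount C a b x = ∑ i ∈ C, (Set.Ico (a i) (b i)).indicator 1 x := by
  simp only [crossCount, natCast_card_filter, Set.indicator_apply, Set.mem_Ico, Pi.one_apply]

lemma integrable_indicator_one_Ico (a b : ℝ) :
    Integrable ((Set.Ico a b).indicator (1 : ℝ → ℝ)) :=
  (integrableOn_const (by simp)).integrable_indicator measurableSet_Ico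

lemma integrable_crossCount (C : Finset ι) (a b : ι → ℝ) : Integrable (crossCount C a b) := by
  simp_rw [funext (crossCount_eq_sum_indicator C a b)]
  exact integrable_finsetSum _ fun i _ => integrable_indicator_one_Ico _ _

lemma integral_crossCount (C : Finset ι) (a b : ι → ℝ) :
    ∫ x, crossCount C a b x = ∑ i ∈ C, max (b i - a i) 0 := by
  simp_rw [crossCount_eq_sum_indicator]
  rw [integral_finsetSum _ fun i _ => integrable_indicator_one_Ico _ _]
  simp [integral_indicator_one measurableSet_Ico, Real.volume_real_Ico]

lemma crossCount_sub_crossCount (C : Finset ι) (a b : ι → ℝ) (x : ℝ) :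
    crossCount C a b x - crossCount C b a x = #{i ∈ C | a i ≤ x} - #{i ∈ C | b i ≤ x} := by
  simp only [crossCount, natCast_card_filter, ← sum_sub_distrib]
  refine sum_congr rfl fun i _ => ?_
  split_ifs <;> grind

lemma card_filter_apply_le_eq_of_bijOn {C S : Finset ℝ} {M : ℝ → ℝ} (hM : Set.BijOn M C S)
    (x : ℝ) : #{c ∈ C | M c ≤ x} = #{s ∈ S | s ≤ x} := by
  have hS : S = C.image M := coe_injective (by simpa using hM.image_eq.symm)
  rw [hS, filter_image, card_image_of_injOn (hM.injOn.mono (filter_subset _ _))]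

def surplus (C S : Finset ℝ) (x : ℝ) : ℝ := #{c ∈ C | c ≤ x} - #{s ∈ S | s ≤ x}

lemma crossCount_sub_crossCount_eq_surplus {C S : Finset ℝ} {M : ℝ → ℝ}
    (hM : Set.BijOn M C S) (x : ℝ) :
    crossCount C id M x - crossCount C M id x = surplus C S x := by
  rw [crossCount_sub_crossCount, surplus, card_filter_apply_le_eq_of_bijOn hM]
  rfl

lemma sum_abs_sub_eq_integral_crossCount_add (C : Finset ℝ) (M : ℝ → ℝ) :
    ∑ c ∈ C, |c - M c| = ∫ x, (crossCount C id M x + crossCount C M id x) := by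
  rw [integral_add (integrable_crossCount _ _ _) (integrable_crossCount _ _ _),
    integral_crossCount, integral_crossCount, ← sum_add_distrib]
  refine sum_congr rfl fun c _ => ?_
  rw [← max_zero_add_max_neg_zero_eq_abs_self, neg_sub, add_comm, id]

lemma add_eq_abs_sub_add_two_mul_min {α : Type*} [CommRing α] [LinearOrder α] [IsOrderedRing α]
    (a b : α) : a + b = |a - b| + 2 * min a b := by
  rw [← min_add_max, abs_sub_comm, ← max_sub_min_eq_abs]
  ring

lemma sum_abs_sub_eq_integral_abs_surplus_add {C S : Finset ℝ} {M : ℝ → ℝ}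
    (hM : Set.BijOn M C S) :
    ∑ c ∈ C, |c - M c| =
      (∫ x, |surplus C S x|) + 2 * ∫ x, min (crossCount C id M x) (crossCount C M id x) := by
  have hf := integrable_crossCount C id M
  have hb := integrable_crossCount C M id
  have hsurplus : Integrable fun x => |surplus C S x| := by
    simpa only [Pi.sub_apply, crossCount_sub_crossCount_eq_surplus hM] using (hf.sub hb).abs
  have hmin : Integrable fun x => min (crossCount C id M x) (crossCount C M id x) := hf.inf hb
  rw [sum_abs_sub_eq_integral_crossCount_add, ← integral_const_mul,
    ← integral_add hsurplus (hmin.const_mul 2)]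
  simp_rw [← crossCount_sub_crossCount_eq_surplus hM, ← add_eq_abs_sub_add_two_mul_min]

lemma min_crossCount_eq_zero_of_strictMonoOn {C : Finset ℝ} {M : ℝ → ℝ} (hM : StrictMonoOn M C)
    (x : ℝ) :
    min (crossCount C id M x) (crossCount C M id x) = 0 := by
  simp only [crossCount, id, ← Nat.cast_min, Nat.cast_eq_zero, Nat.min_eq_zero_iff,
    card_eq_zero, filter_eq_empty_iff]
  by_contra! h
  obtain ⟨⟨c, hc, hcx, hxc⟩, ⟨c', hc', hcx', hxc'⟩⟩ := h
  have := hM hc hc' (hcx.trans_lt hxc')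
  linarith

lemma exists_bijOn_strictMonoOn {C S : Finset ℝ} (hcard : #C = #S) :
    ∃ M : ℝ → ℝ, Set.BijOn M C S ∧ StrictMonoOn M C := by
  set f := C.orderEmbOfFin rfl
  set g := S.orderEmbOfFin hcard.symm
  have hC : (C : Set ℝ) = Set.range f := (range_orderEmbOfFin C rfl).symm
  have hS : (S : Set ℝ) = Set.range g := (range_orderEmbOfFin S hcard.symm).symm
  set M := Function.extend f g id
  have hMf : M ∘ f = g := funext (f.injective.extend_apply g id)
  have hmono : StrictMonoOn M C := by
    rw [hC]
    rintro _ ⟨i, rfl⟩ _ ⟨j, rfl⟩ hij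
    simpa only [← Function.comp_apply (f := M), hMf] using g.strictMono (f.lt_iff_lt.1 hij)
  refine ⟨M, ?_, hmono⟩
  have := hmono.injOn.bijOn_image
  rwa [hC, ← Set.range_comp, hMf, ← hS, ← hC] at this

lemma isLeast_sum_abs_sub {C S : Finset ℝ} (hcard : #C = #S) :
    IsLeast {r : ℝ | ∃ M' : ℝ → ℝ, Set.BijOn M' ↑C ↑S ∧ r = ∑ c ∈ C, |c - M' c|}
      (∫ x, |surplus C S x|) := by
  constructor
  · obtain ⟨M₀, hM₀, hmono⟩ := exists_bijOn_strictMonoOn hcard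
    refine ⟨M₀, hM₀, ?_⟩
    simp [sum_abs_sub_eq_integral_abs_surplus_add hM₀,
      min_crossCount_eq_zero_of_strictMonoOn hmono]
  · rintro _ ⟨M', hM', rfl⟩
    have : 0 ≤ ∫ x, min (crossCount C id M' x) (crossCount C M' id x) :=
      integral_nonneg fun x => le_min (Nat.cast_nonneg _) (Nat.cast_nonneg _)
    rw [sum_abs_sub_eq_integral_abs_surplus_add hM']
    linarith

end

theorem stmt12_general (C S : Finset ℝ) (hcard : C.card = S.card)
    (M : ℝ → ℝ) (hM : Set.BijOn M ↑C ↑S) :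
    ∑ c ∈ C, |c - M c| =
      sInf {r : ℝ | ∃ M' : ℝ → ℝ, Set.BijOn M' ↑C ↑S ∧ r = ∑ c ∈ C, |c - M' c|} +
        2 * ∫ x : ℝ,
          min (((C.filter (fun c => c ≤ x ∧ x < M c)).card : ℝ))
            (((C.filter (fun c => M c ≤ x ∧ x < c)).card : ℝ)) := by
  rw [(isLeast_sum_abs_sub hcard).csInf_eq]
  exact sum_abs_sub_eq_integral_abs_surplus_add hM

/-- On the line, for finite client and server sets `C, S ⊂ ℝ` with `|C| = |S| = m ≥ 1` and
any bijection `M : C → S`, the cost of `M` equals `OPT` (the minimum cost over all bijections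
from `C` to `S`) plus twice the Lebesgue integral of the pointwise minimum of the number of
forward arcs of `M` crossing `x` and the number of backward arcs of `M` crossing `x`. -/
theorem stmt12 (C S : Finset ℝ) (hcard : C.card = S.card) (hm : 1 ≤ C.card)
    (M : ℝ → ℝ) (hM : Set.BijOn M ↑C ↑S) :
    ∑ c ∈ C, |c - M c| =
      sInf {r : ℝ | ∃ M' : ℝ → ℝ, Set.BijOn M' ↑C ↑S ∧ r = ∑ c ∈ C, |c - M' c|} +
        2 * ∫ x : ℝ,
          min (((C.filter (fun c => c ≤ x ∧ x < M c)).card : ℝ))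
            (((C.filter (fun c => M c ≤ x ∧ x < c)).card : ℝ)) :=
  stmt12_general C S hcard M hM
end
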